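/- arXiv:1906.07424 — 9 statements merged into one kernel-verified Lean document; each statement's English description precedes it below -/
import Mathlib

section
/- For every real α and every real z, ∫_{−∞}^{z} ((1 − α t)² + 1)² φ(t) / ((2 + α²)(2 + 3α²)) dt = Φ(z) + α·(8 − 8αz + 4α²(2 + z²) − α³ z (3 + z²)) · φ(z) / ((2 + α²)(2 + 3α²)). That is, the cumulative distribution function of the Balakrishnan alpha skew normal distribution BASN₂(α) is F(z; α) = Φ(z) + α{8 − 8αz + 4α²(2 + z²) − α³z(3 + z²)} φ(z) / ((2 + α²)(2 + 3α²)). -/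
open MeasureTheory Filter Real

/-- The standard normal probability density function. -/
noncomputable def phi (z : ℝ) : ℝ := (Real.sqrt (2 * Real.pi))⁻¹ * Real.exp (-z ^ 2 / 2)

lemma hasDerivAt_phi (t : ℝ) : HasDerivAt phi (-t * phi t) t := by
  have h : HasDerivAt (fun t : ℝ => -t ^ 2 / 2) (-t) t := by
    have := ((hasDerivAt_pow 2 t).neg).div_const 2
    refine this.congr_deriv ?_
    simp; ring
  have := (h.exp).const_mul (Real.sqrt (2 * Real.pi))⁻¹
  refine this.congr_deriv ?_
  unfold phi; ring

lemma tendsto_monomial_gauss (k : ℕ) :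
    Tendsto (fun t : ℝ => t ^ k * Real.exp (-t ^ 2 / 2)) atBot (nhds 0) := by
  have h1 : Tendsto (fun s : ℝ => s ^ k * Real.exp (-s ^ 2 / 2)) atTop (nhds 0) := by
    have h := (rpow_mul_exp_neg_mul_sq_isLittleO_exp_neg (by norm_num : (0:ℝ) < 1/2)
        (k : ℝ)).isBigO.trans_tendsto ?_
    · refine h.congr fun x => ?_
      rw [Real.rpow_natCast, show -(1/2 : ℝ) * x ^ 2 = -x ^ 2 / 2 by ring]
    · have : Tendsto (fun x : ℝ => -(1/2 : ℝ) * x) atTop atBot :=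
        tendsto_id.const_mul_atTop_of_neg (by norm_num)
      exact Real.tendsto_exp_atBot.comp this
  have h2 := (h1.comp tendsto_neg_atBot_atTop).const_mul ((-1 : ℝ) ^ k)
  rw [mul_zero] at h2
  refine h2.congr fun t => ?_
  simp only [Function.comp]
  rw [neg_sq, ← mul_assoc, ← mul_pow, neg_mul_neg, one_mul]

lemma integrable_monomial_gauss (k : ℕ) :
    Integrable (fun t : ℝ => t ^ k * Real.exp (-t ^ 2 / 2)) := by
  have h := integrable_rpow_mul_exp_neg_mul_sq (by norm_num : (0:ℝ) < 1/2)
      (s := (k : ℝ)) (lt_of_lt_of_le (by norm_num) (Nat.cast_nonneg k))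
  refine h.congr (Filter.Eventually.of_forall fun x => ?_)
  show x ^ (k : ℝ) * Real.exp (-(1/2) * x ^ 2) = x ^ k * Real.exp (-x ^ 2 / 2)
  rw [Real.rpow_natCast, show -(1/2 : ℝ) * x ^ 2 = -x ^ 2 / 2 by ring]

/-- The standard normal cumulative distribution function. -/
noncomputable def Phi (z : ℝ) : ℝ := ∫ t in Set.Iic z, phi t

lemma integrable_phi : Integrable phi := by
  have := (integrable_monomial_gauss 0).const_mul (Real.sqrt (2 * Real.pi))⁻¹
  refine this.congr (Filter.Eventually.of_forall fun x => ?_)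
  simp [phi]

lemma integrable_gpart (α : ℝ) :
    Integrable (fun t : ℝ =>
      (((1 - α * t) ^ 2 + 1) ^ 2 - (2 + α ^ 2) * (2 + 3 * α ^ 2)) * phi t /
        ((2 + α ^ 2) * (2 + 3 * α ^ 2))) := by
  set c : ℝ := (Real.sqrt (2 * Real.pi))⁻¹ / ((2 + α ^ 2) * (2 + 3 * α ^ 2)) with hc
  have h := (((integrable_monomial_gauss 0).const_mul ((-8*α^2-3*α^4) * c)).add
    (((integrable_monomial_gauss 1).const_mul ((-8*α) * c)).add
    (((integrable_monomial_gauss 2).const_mul ((8*α^2) * c)).add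
    (((integrable_monomial_gauss 3).const_mul ((-4*α^3) * c)).add
    ((integrable_monomial_gauss 4).const_mul ((α^4) * c))))))
  refine h.congr (Filter.Eventually.of_forall fun t => ?_)
  simp only [Pi.add_apply, phi, hc]
  ring

lemma tendsto_Fpart (α : ℝ) :
    Tendsto (fun t : ℝ =>
        α * (8 - 8 * α * t + 4 * α ^ 2 * (2 + t ^ 2) - α ^ 3 * t * (3 + t ^ 2)) * phi t /
          ((2 + α ^ 2) * (2 + 3 * α ^ 2))) atBot (nhds 0) := by
  set c : ℝ := (Real.sqrt (2 * Real.pi))⁻¹ / ((2 + α ^ 2) * (2 + 3 * α ^ 2)) with hc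
  have h := (((tendsto_monomial_gauss 0).const_mul ((8*α+8*α^3) * c)).add
    (((tendsto_monomial_gauss 1).const_mul ((-8*α^2-3*α^4) * c)).add
    (((tendsto_monomial_gauss 2).const_mul ((4*α^3) * c)).add
    ((tendsto_monomial_gauss 3).const_mul ((-α^4) * c)))))
  simp only [mul_zero, add_zero] at h
  refine h.congr fun t => ?_
  simp only [phi, hc]
  ring

lemma hasDerivAt_Fpart (α t : ℝ) :
    HasDerivAt (fun t : ℝ =>
        α * (8 - 8 * α * t + 4 * α ^ 2 * (2 + t ^ 2) - α ^ 3 * t * (3 + t ^ 2)) * phi t /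
          ((2 + α ^ 2) * (2 + 3 * α ^ 2)))
      ((((1 - α * t) ^ 2 + 1) ^ 2 - (2 + α ^ 2) * (2 + 3 * α ^ 2)) * phi t /
        ((2 + α ^ 2) * (2 + 3 * α ^ 2))) t := by
  have h1 : HasDerivAt (fun t : ℝ => 8 * α * t) (8 * α) t := by
    simpa using (hasDerivAt_id t).const_mul (8 * α)
  have h2 : HasDerivAt (fun t : ℝ => 4 * α ^ 2 * (2 + t ^ 2)) (4 * α ^ 2 * (2 * t)) t := by
    simpa using ((hasDerivAt_pow 2 t).const_add 2).const_mul (4 * α ^ 2)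
  have h3 : HasDerivAt (fun t : ℝ => α ^ 3 * t * (3 + t ^ 2))
      (α ^ 3 * (3 + t ^ 2) + α ^ 3 * t * (2 * t)) t := by
    exact (((hasDerivAt_id t).const_mul (α ^ 3)).mul ((hasDerivAt_pow 2 t).const_add 3)).congr_deriv (by simp)
  have hQ := ((((hasDerivAt_const t (8:ℝ)).sub h1).add h2).sub h3).const_mul α
  have hF := (hQ.mul (hasDerivAt_phi t)).div_const ((2 + α ^ 2) * (2 + 3 * α ^ 2))
  refine hF.congr_deriv ?_
  simp only [Pi.sub_apply, Pi.add_apply]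
  have hD : ((2 + α ^ 2) * (2 + 3 * α ^ 2) : ℝ) ≠ 0 := by positivity
  field_simp
  ring

theorem basn2_cdf (α z : ℝ) :
    (∫ t in Set.Iic z, ((1 - α * t) ^ 2 + 1) ^ 2 * phi t / ((2 + α ^ 2) * (2 + 3 * α ^ 2))) =
      Phi z + α * (8 - 8 * α * z + 4 * α ^ 2 * (2 + z ^ 2) - α ^ 3 * z * (3 + z ^ 2)) * phi z /
        ((2 + α ^ 2) * (2 + 3 * α ^ 2)) := by
  have hD : ((2 + α ^ 2) * (2 + 3 * α ^ 2) : ℝ) ≠ 0 := by positivity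
  have key :
      (∫ t in Set.Iic z,
          (((1 - α * t) ^ 2 + 1) ^ 2 - (2 + α ^ 2) * (2 + 3 * α ^ 2)) * phi t /
            ((2 + α ^ 2) * (2 + 3 * α ^ 2))) =
        α * (8 - 8 * α * z + 4 * α ^ 2 * (2 + z ^ 2) - α ^ 3 * z * (3 + z ^ 2)) * phi z /
          ((2 + α ^ 2) * (2 + 3 * α ^ 2)) - 0 :=
    integral_Iic_of_hasDerivAt_of_tendsto' (fun t _ => hasDerivAt_Fpart α t)
      (integrable_gpart α).integrableOn (tendsto_Fpart α)
  have hsplit :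
      (∫ t in Set.Iic z, ((1 - α * t) ^ 2 + 1) ^ 2 * phi t / ((2 + α ^ 2) * (2 + 3 * α ^ 2))) =
        (∫ t in Set.Iic z, (phi t +
          (((1 - α * t) ^ 2 + 1) ^ 2 - (2 + α ^ 2) * (2 + 3 * α ^ 2)) * phi t /
            ((2 + α ^ 2) * (2 + 3 * α ^ 2)))) := by
    refine integral_congr_ae (Filter.Eventually.of_forall fun t => ?_)
    field_simp
    ring
  rw [hsplit, integral_add integrable_phi.integrableOn (integrable_gpart α).integrableOn, key]
  simp [Phi]
end

section
/- Let α ∈ ℝ and let f(z; α) = ((1 − α z)² + 1)² φ(z) / ((2 + α²)(2 + 3α²)). For every even natural number n, ∫_ℝ zⁿ f(z; α) dz = 2^{n/2} · (4 + (1+n)α²(8 + (3+n)α²)) · Γ((1+n)/2) / (Γ(1/2) · (2 + α²)(2 + 3α²)); and for every odd natural number n, ∫_ℝ zⁿ f(z; α) dz = −2^{(5+n)/2} · α · (2 + (2+n)α²) · Γ(1 + n/2) / (Γ(1/2) · (2 + α²)(2 + 3α²)). -/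
open MeasureTheory

open Real in
lemma integ_pow_phi (k : ℕ) : Integrable (fun z : ℝ => z ^ k * phi z) := by
  have h := integrable_rpow_mul_exp_neg_mul_sq (b := (1/2 : ℝ)) (by norm_num)
    (s := (k : ℝ)) (lt_of_lt_of_le (by norm_num) (Nat.cast_nonneg k))
  have e : (fun z : ℝ => z ^ k * phi z)
      = fun z : ℝ => (Real.sqrt (2 * Real.pi))⁻¹ * (z ^ ((k : ℝ)) * Real.exp (-(1/2) * z ^ 2)) := by
    funext z
    rw [Real.rpow_natCast]
    simp only [phi]
    rw [show -(1/2 : ℝ) * z ^ 2 = -z ^ 2 / 2 by ring]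
    ring
  rw [e]
  exact h.const_mul _

lemma gauss_even (k : ℕ) (hk : Even k) :
    (∫ z : ℝ, z ^ k * phi z)
      = 2 ^ ((k : ℝ) / 2) * Real.Gamma (((k : ℝ) + 1) / 2) / Real.Gamma (1 / 2) := by
  have h1 : ∀ z : ℝ, z ^ k * phi z
      = (Real.sqrt (2 * Real.pi))⁻¹ * ((fun x : ℝ => x ^ k * Real.exp (-(1/2) * x ^ 2)) |z|) := by
    intro z
    simp only [phi, hk.pow_abs, sq_abs]
    rw [show -(1/2 : ℝ) * z ^ 2 = -z ^ 2 / 2 by ring]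
    ring
  have h2 : (∫ x in Set.Ioi (0:ℝ), x ^ k * Real.exp (-(1/2) * x ^ 2))
      = (1/2 : ℝ) ^ (-((k : ℝ) + 1) / 2) * (1 / 2) * Real.Gamma (((k : ℝ) + 1) / 2) := by
    rw [← integral_rpow_mul_exp_neg_mul_rpow (p := 2) (q := (k : ℝ)) (b := (1/2 : ℝ))
      (by norm_num) (lt_of_lt_of_le (by norm_num) (Nat.cast_nonneg k)) (by norm_num)]
    refine setIntegral_congr_fun measurableSet_Ioi (fun x hx => ?_)
    rw [Real.rpow_natCast, Real.rpow_two]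
  calc (∫ z : ℝ, z ^ k * phi z)
      = (Real.sqrt (2 * Real.pi))⁻¹ *
        ∫ z : ℝ, (fun x : ℝ => x ^ k * Real.exp (-(1/2) * x ^ 2)) |z| := by
        simp_rw [h1]; exact integral_const_mul _ _
    _ = (Real.sqrt (2 * Real.pi))⁻¹ * (2 * ∫ x in Set.Ioi (0:ℝ), x ^ k * Real.exp (-(1/2) * x ^ 2)) := by
        rw [integral_comp_abs (f := fun x : ℝ => x ^ k * Real.exp (-(1/2) * x ^ 2))]
    _ = 2 ^ ((k : ℝ) / 2) * Real.Gamma (((k : ℝ) + 1) / 2) / Real.Gamma (1 / 2) := by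
        rw [h2]
        have e1 : (1/2 : ℝ) ^ (-((k : ℝ) + 1) / 2) = 2 ^ (((k : ℝ) + 1) / 2) := by
          rw [one_div, Real.inv_rpow (by norm_num : (0:ℝ) ≤ 2),
            ← Real.rpow_neg (by norm_num : (0:ℝ) ≤ 2)]
          congr 1; ring
        have e2 : (2 : ℝ) ^ (((k : ℝ) + 1) / 2) = 2 ^ ((k : ℝ) / 2) * 2 ^ ((1:ℝ) / 2) := by
          rw [← Real.rpow_add (by norm_num)]; congr 1; ring
        have e3 : Real.sqrt (2 * Real.pi) = 2 ^ ((1:ℝ) / 2) * Real.Gamma (1 / 2) := by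
          rw [Real.Gamma_one_half_eq, Real.sqrt_mul (by norm_num), Real.sqrt_eq_rpow]
        have hG : Real.Gamma (1/2 : ℝ) ≠ 0 := by
          rw [Real.Gamma_one_half_eq]; positivity
        have h2r : (2 : ℝ) ^ ((1:ℝ)/2) ≠ 0 := by positivity
        rw [e1, e2, e3]
        field_simp

lemma gauss_odd (k : ℕ) (hk : Odd k) : (∫ z : ℝ, z ^ k * phi z) = 0 := by
  have h : ∀ z : ℝ, (fun z : ℝ => z ^ k * phi z) (-z) = -((fun z : ℝ => z ^ k * phi z) z) := by
    intro z
    simp only [phi, hk.neg_pow, neg_sq]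
    ring
  have h2 := integral_neg_eq_self (fun z : ℝ => z ^ k * phi z) (volume : Measure ℝ)
  simp_rw [h, integral_neg] at h2
  linarith

theorem basn2_moments (α : ℝ) (n : ℕ) :
    (Even n →
      (∫ z : ℝ, z ^ n * (((1 - α * z) ^ 2 + 1) ^ 2 * phi z / ((2 + α ^ 2) * (2 + 3 * α ^ 2)))) =
        (2 : ℝ) ^ ((n : ℝ) / 2) * (4 + (1 + (n : ℝ)) * α ^ 2 * (8 + (3 + (n : ℝ)) * α ^ 2)) *
          Real.Gamma ((1 + (n : ℝ)) / 2) /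
          (Real.Gamma (1 / 2) * ((2 + α ^ 2) * (2 + 3 * α ^ 2)))) ∧
    (Odd n →
      (∫ z : ℝ, z ^ n * (((1 - α * z) ^ 2 + 1) ^ 2 * phi z / ((2 + α ^ 2) * (2 + 3 * α ^ 2)))) =
        -((2 : ℝ) ^ ((5 + (n : ℝ)) / 2)) * α * (2 + (2 + (n : ℝ)) * α ^ 2) *
          Real.Gamma (1 + (n : ℝ) / 2) /
          (Real.Gamma (1 / 2) * ((2 + α ^ 2) * (2 + 3 * α ^ 2)))) := by
  set C : ℝ := (2 + α ^ 2) * (2 + 3 * α ^ 2) with hCdef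
  have hC : C ≠ 0 := by rw [hCdef]; positivity
  have hG : Real.Gamma (1/2 : ℝ) ≠ 0 := by
    rw [Real.Gamma_one_half_eq]; positivity
  have key : ∀ z : ℝ, z ^ n * (((1 - α * z) ^ 2 + 1) ^ 2 * phi z / C)
      = (α ^ 4 * (z ^ (n + 4) * phi z) + (-(4 * α ^ 3)) * (z ^ (n + 3) * phi z)
        + 8 * α ^ 2 * (z ^ (n + 2) * phi z) + (-(8 * α)) * (z ^ (n + 1) * phi z)
        + 4 * (z ^ n * phi z)) / C := by
    intro z; ring
  have hA : Integrable (fun z : ℝ => α ^ 4 * (z ^ (n + 4) * phi z)) :=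
    (integ_pow_phi (n + 4)).const_mul (α ^ 4)
  have hB : Integrable (fun z : ℝ => (-(4 * α ^ 3)) * (z ^ (n + 3) * phi z)) :=
    (integ_pow_phi (n + 3)).const_mul (-(4 * α ^ 3))
  have hCc : Integrable (fun z : ℝ => 8 * α ^ 2 * (z ^ (n + 2) * phi z)) :=
    (integ_pow_phi (n + 2)).const_mul (8 * α ^ 2)
  have hD : Integrable (fun z : ℝ => (-(8 * α)) * (z ^ (n + 1) * phi z)) :=
    (integ_pow_phi (n + 1)).const_mul (-(8 * α))
  have hE : Integrable (fun z : ℝ => (4 : ℝ) * (z ^ n * phi z)) :=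
    (integ_pow_phi n).const_mul (4 : ℝ)
  have hAB : Integrable (fun z : ℝ => α ^ 4 * (z ^ (n + 4) * phi z)
      + (-(4 * α ^ 3)) * (z ^ (n + 3) * phi z)) := hA.add hB
  have hABC : Integrable (fun z : ℝ => α ^ 4 * (z ^ (n + 4) * phi z)
      + (-(4 * α ^ 3)) * (z ^ (n + 3) * phi z) + 8 * α ^ 2 * (z ^ (n + 2) * phi z)) := hAB.add hCc
  have hABCD : Integrable (fun z : ℝ => α ^ 4 * (z ^ (n + 4) * phi z)
      + (-(4 * α ^ 3)) * (z ^ (n + 3) * phi z) + 8 * α ^ 2 * (z ^ (n + 2) * phi z)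
      + (-(8 * α)) * (z ^ (n + 1) * phi z)) := hABC.add hD
  have main : (∫ z : ℝ, z ^ n * (((1 - α * z) ^ 2 + 1) ^ 2 * phi z / C))
      = (α ^ 4 * (∫ z : ℝ, z ^ (n + 4) * phi z)
        + (-(4 * α ^ 3)) * (∫ z : ℝ, z ^ (n + 3) * phi z)
        + 8 * α ^ 2 * (∫ z : ℝ, z ^ (n + 2) * phi z)
        + (-(8 * α)) * (∫ z : ℝ, z ^ (n + 1) * phi z)
        + 4 * (∫ z : ℝ, z ^ n * phi z)) / C := by
    simp_rw [key]
    rw [integral_div, integral_add hABCD hE, integral_add hABC hD, integral_add hAB hCc,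
      integral_add hA hB, integral_const_mul, integral_const_mul, integral_const_mul,
      integral_const_mul, integral_const_mul]
  constructor
  · intro hn
    obtain ⟨m, rfl⟩ := hn
    have h0 := gauss_even (m + m) ⟨m, rfl⟩
    have h2 := gauss_even (m + m + 2) ⟨m + 1, by ring⟩
    have h4 := gauss_even (m + m + 4) ⟨m + 2, by ring⟩
    have h1 := gauss_odd (m + m + 1) ⟨m, by ring⟩
    have h3 := gauss_odd (m + m + 3) ⟨m + 1, by ring⟩
    rw [main, h0, h1, h2, h3, h4]
    push_cast
    set x : ℝ := (m : ℝ) + (m : ℝ) with hx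
    have hx0 : (0 : ℝ) ≤ x := by positivity
    have t2 : (2 : ℝ) ^ ((x + 2) / 2) = 2 * 2 ^ (x / 2) := by
      rw [show (x + 2) / 2 = x / 2 + 1 by ring, Real.rpow_add_one (by norm_num)]; ring
    have t4 : (2 : ℝ) ^ ((x + 4) / 2) = 4 * 2 ^ (x / 2) := by
      rw [show (x + 4) / 2 = x / 2 + 1 + 1 by ring, Real.rpow_add_one (by norm_num),
        Real.rpow_add_one (by norm_num)]; ring
    have g2 : Real.Gamma ((x + 2 + 1) / 2) = (x + 1) / 2 * Real.Gamma ((x + 1) / 2) := by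
      rw [show (x + 2 + 1) / 2 = (x + 1) / 2 + 1 by ring,
        Real.Gamma_add_one (by positivity)]
    have g4 : Real.Gamma ((x + 4 + 1) / 2)
        = ((x + 3) / 2) * ((x + 1) / 2 * Real.Gamma ((x + 1) / 2)) := by
      rw [show (x + 4 + 1) / 2 = (x + 2 + 1) / 2 + 1 by ring,
        Real.Gamma_add_one (by positivity), g2]
      ring
    rw [t2, t4, g2, g4, show (1 + x) / 2 = (x + 1) / 2 by ring]
    field_simp
    ring
  · intro hn
    obtain ⟨m, rfl⟩ := hn
    have h0 := gauss_odd (2 * m + 1) ⟨m, rfl⟩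
    have h2 := gauss_odd (2 * m + 1 + 2) ⟨m + 1, by ring⟩
    have h4 := gauss_odd (2 * m + 1 + 4) ⟨m + 2, by ring⟩
    have h1 := gauss_even (2 * m + 1 + 1) ⟨m + 1, by ring⟩
    have h3 := gauss_even (2 * m + 1 + 3) ⟨m + 2, by ring⟩
    rw [main, h0, h1, h2, h3, h4]
    push_cast
    set x : ℝ := 2 * (m : ℝ) + 1 with hx
    have hx0 : (0 : ℝ) ≤ x := by positivity
    have t3 : (2 : ℝ) ^ ((x + 3) / 2) = 2 * 2 ^ ((x + 1) / 2) := by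
      rw [show (x + 3) / 2 = (x + 1) / 2 + 1 by ring, Real.rpow_add_one (by norm_num)]; ring
    have t5 : (2 : ℝ) ^ ((5 + x) / 2) = 4 * 2 ^ ((x + 1) / 2) := by
      rw [show (5 + x) / 2 = (x + 1) / 2 + 1 + 1 by ring, Real.rpow_add_one (by norm_num),
        Real.rpow_add_one (by norm_num)]; ring
    have g1 : Real.Gamma ((x + 1 + 1) / 2) = Real.Gamma (1 + x / 2) := by
      rw [show (x + 1 + 1) / 2 = 1 + x / 2 by ring]
    have g3 : Real.Gamma ((x + 3 + 1) / 2) = (1 + x / 2) * Real.Gamma (1 + x / 2) := by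
      rw [show (x + 3 + 1) / 2 = 1 + x / 2 + 1 by ring,
        Real.Gamma_add_one (by positivity)]
    rw [t3, t5, g1, g3]
    field_simp
    ring
end

section
/- Let α ∈ ℝ and let f(z; α) = ((1 − α z)² + 1)² φ(z) / ((2 + α²)(2 + 3α²)). Then the mean is μ(α) := ∫_ℝ z f(z; α) dz = −4α/(2 + α²), and the variance is ∫_ℝ (z − μ(α))² f(z; α) dz = (2 + 5α²)(4 + 3α⁴) / ((2 + α²)² (2 + 3α²)). -/
open MeasureTheory Filter Real

lemma basn_integrable (n : ℕ) :
    Integrable (fun z : ℝ => z ^ n * Real.exp (-z ^ 2 / 2)) := by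
  have h := integrable_rpow_mul_exp_neg_mul_sq (b := (1:ℝ)/2) (by norm_num)
    (s := (n : ℝ)) (lt_of_lt_of_le (by norm_num) (Nat.cast_nonneg n))
  refine h.congr (Filter.Eventually.of_forall fun z => ?_)
  simp only [Real.rpow_natCast]
  ring_nf

lemma basn_tendsto_top (k : ℕ) :
    Tendsto (fun z : ℝ => z ^ k * Real.exp (-z ^ 2 / 2)) atTop (nhds 0) := by
  have h := rpow_mul_exp_neg_mul_sq_isLittleO_exp_neg (b := (1:ℝ)/2) (by norm_num) (k : ℝ)
  have h2 : Tendsto (fun x : ℝ => Real.exp (-(1/2) * x)) atTop (nhds 0) :=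
    Real.tendsto_exp_atBot.comp (by
      have := (tendsto_id.const_mul_atTop (by norm_num : (0:ℝ) < 1/2) : Tendsto (fun x : ℝ => (1/2) * x) atTop atTop)
      have h5 := tendsto_neg_atBot_iff.mpr this
      show Tendsto (fun x : ℝ => -(1/2) * x) atTop atBot
      simp only [neg_mul]
      exact h5)
  have h3 := h.trans_tendsto h2
  refine h3.congr fun z => ?_
  simp only [Real.rpow_natCast]
  ring_nf

lemma basn_tendsto_bot (k : ℕ) :
    Tendsto (fun z : ℝ => z ^ k * Real.exp (-z ^ 2 / 2)) atBot (nhds 0) := by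
  have h := (basn_tendsto_top k).comp tendsto_neg_atBot_atTop
  have h2 := h.const_mul ((-1 : ℝ) ^ k)
  rw [mul_zero] at h2
  refine h2.congr fun z => ?_
  show (-1 : ℝ) ^ k * ((-z) ^ k * Real.exp (-(-z) ^ 2 / 2)) = _
  rw [← mul_assoc, ← mul_pow]
  ring_nf

lemma basn_hasDerivAt (k : ℕ) (z : ℝ) :
    HasDerivAt (fun z : ℝ => -(z ^ k * Real.exp (-z ^ 2 / 2)))
      (z ^ (k + 1) * Real.exp (-z ^ 2 / 2) - (k : ℝ) * (z ^ (k - 1) * Real.exp (-z ^ 2 / 2))) z := by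
  have h1 : HasDerivAt (fun z : ℝ => -z ^ 2 / 2) (-z) z := by
    have h := ((hasDerivAt_pow 2 z).neg.div_const 2)
    refine h.congr_deriv ?_
    ring
  have h3 := (hasDerivAt_pow k z).mul h1.exp
  have h4 := h3.neg
  refine h4.congr_deriv ?_
  cases k with
  | zero => simp; ring
  | succ n =>
    simp only [Nat.cast_add, Nat.cast_one, Nat.add_sub_cancel]
    rw [pow_succ (z) (n+1)]
    ring

lemma basn_moment_rec (k : ℕ) :
    ∫ z : ℝ, z ^ (k + 2) * Real.exp (-z ^ 2 / 2)
      = ((k : ℝ) + 1) * ∫ z : ℝ, z ^ k * Real.exp (-z ^ 2 / 2) := by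
  have hd := basn_hasDerivAt (k + 1)
  have hint : Integrable (fun z : ℝ => z ^ (k + 2) * Real.exp (-z ^ 2 / 2)
      - ((k : ℝ) + 1) * (z ^ k * Real.exp (-z ^ 2 / 2))) :=
    (basn_integrable (k + 2)).sub ((basn_integrable k).const_mul _)
  have h0 : (∫ z : ℝ, (z ^ (k + 2) * Real.exp (-z ^ 2 / 2)
      - ((k : ℝ) + 1) * (z ^ k * Real.exp (-z ^ 2 / 2)))) = 0 - 0 := by
    refine integral_of_hasDerivAt_of_tendsto (fun z => ?_) hint
      (by simpa using (basn_tendsto_bot (k + 1)).neg)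
      (by simpa using (basn_tendsto_top (k + 1)).neg)
    have := hd z
    simpa [Nat.add_sub_cancel] using this
  rw [integral_sub (basn_integrable (k + 2)) ((basn_integrable k).const_mul _),
    integral_const_mul] at h0
  linarith

lemma basn_M0 : ∫ z : ℝ, z ^ 0 * Real.exp (-z ^ 2 / 2) = Real.sqrt (2 * Real.pi) := by
  have h := integral_gaussian (1/2 : ℝ)
  have e1 : ∀ z : ℝ, z ^ 0 * Real.exp (-z ^ 2 / 2) = Real.exp (-(1/2) * z ^ 2) := fun z => by
    rw [pow_zero, one_mul]; congr 1; ring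
  simp only [e1, h]
  congr 1
  ring

lemma basn_M1 : ∫ z : ℝ, z ^ 1 * Real.exp (-z ^ 2 / 2) = 0 := by
  have hd : ∀ z : ℝ, HasDerivAt (fun z : ℝ => -(z ^ 0 * Real.exp (-z ^ 2 / 2)))
      (z ^ 1 * Real.exp (-z ^ 2 / 2)) z := fun z => by
    have := basn_hasDerivAt 0 z
    simpa using this
  have h := integral_of_hasDerivAt_of_tendsto hd (basn_integrable 1)
    (by simpa using (basn_tendsto_bot 0).neg) (by simpa using (basn_tendsto_top 0).neg)
  simpa using h

lemma basn_M2 : ∫ z : ℝ, z ^ 2 * Real.exp (-z ^ 2 / 2) = Real.sqrt (2 * Real.pi) := by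
  have := basn_moment_rec 0
  simp only [basn_M0] at this
  simpa using this

lemma basn_M3 : ∫ z : ℝ, z ^ 3 * Real.exp (-z ^ 2 / 2) = 0 := by
  have := basn_moment_rec 1
  simp only [basn_M1] at this
  simpa using this

lemma basn_M4 : ∫ z : ℝ, z ^ 4 * Real.exp (-z ^ 2 / 2) = 3 * Real.sqrt (2 * Real.pi) := by
  have := basn_moment_rec 2
  rw [basn_M2] at this
  rw [this]; norm_num

lemma basn_M5 : ∫ z : ℝ, z ^ 5 * Real.exp (-z ^ 2 / 2) = 0 := by
  have := basn_moment_rec 3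
  rw [basn_M3] at this
  rw [this]; ring

lemma basn_M6 : ∫ z : ℝ, z ^ 6 * Real.exp (-z ^ 2 / 2) = 15 * Real.sqrt (2 * Real.pi) := by
  have := basn_moment_rec 4
  rw [basn_M4] at this
  rw [this]; norm_num; ring

lemma basn_key (a : Fin 7 → ℝ) :
    ∫ z : ℝ, (∑ i : Fin 7, a i * z ^ (i : ℕ)) * Real.exp (-z ^ 2 / 2)
      = ∑ i : Fin 7, a i * ∫ z : ℝ, z ^ (i : ℕ) * Real.exp (-z ^ 2 / 2) := by
  have e : ∀ z : ℝ, (∑ i : Fin 7, a i * z ^ (i : ℕ)) * Real.exp (-z ^ 2 / 2)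
      = ∑ i : Fin 7, a i * (z ^ (i : ℕ) * Real.exp (-z ^ 2 / 2)) := fun z => by
    rw [Finset.sum_mul]; exact Finset.sum_congr rfl fun i _ => by ring
  simp only [e]
  rw [integral_finset_sum (μ := volume) Finset.univ
    (f := fun (i : Fin 7) (z : ℝ) => a i * (z ^ (i : ℕ) * Real.exp (-z ^ 2 / 2)))
    (fun i _ => (basn_integrable (i : ℕ)).const_mul _)]
  exact Finset.sum_congr rfl fun i _ => integral_const_mul _ _
lemma basn_M0' : ∫ z : ℝ, Real.exp (-z ^ 2 / 2) = Real.sqrt (2 * Real.pi) := by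
  have := basn_M0; simpa using this

lemma basn_M1' : ∫ z : ℝ, z * Real.exp (-z ^ 2 / 2) = 0 := by
  have := basn_M1; simpa using this

lemma basn_key7 (a0 a1 a2 a3 a4 a5 a6 : ℝ) :
    ∫ z : ℝ, (a0 + a1 * z + a2 * z ^ 2 + a3 * z ^ 3 + a4 * z ^ 4 + a5 * z ^ 5 + a6 * z ^ 6)
        * Real.exp (-z ^ 2 / 2)
      = (a0 + a2 + 3 * a4 + 15 * a6) * Real.sqrt (2 * Real.pi) := by
  have e : (fun z : ℝ => (a0 + a1 * z + a2 * z ^ 2 + a3 * z ^ 3 + a4 * z ^ 4 + a5 * z ^ 5 + a6 * z ^ 6)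
        * Real.exp (-z ^ 2 / 2))
      = fun z : ℝ => (∑ i : Fin 7, (![a0, a1, a2, a3, a4, a5, a6] : Fin 7 → ℝ) i * z ^ (i : ℕ))
        * Real.exp (-z ^ 2 / 2) := by
    funext z
    simp [Fin.sum_univ_succ, Matrix.cons_val_zero, Matrix.cons_val_succ]
    ring
  rw [show (fun z : ℝ => (a0 + a1 * z + a2 * z ^ 2 + a3 * z ^ 3 + a4 * z ^ 4 + a5 * z ^ 5 + a6 * z ^ 6)
        * Real.exp (-z ^ 2 / 2)) = _ from e, basn_key]
  simp [Fin.sum_univ_succ, Matrix.cons_val_zero, Matrix.cons_val_succ,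
    basn_M0, basn_M0', basn_M1, basn_M1', basn_M2, basn_M3, basn_M4, basn_M5, basn_M6]
  ring

set_option maxHeartbeats 1600000 in
theorem basn2_mean_variance (α : ℝ) :
    (∫ z : ℝ, z * (((1 - α * z) ^ 2 + 1) ^ 2 * phi z / ((2 + α ^ 2) * (2 + 3 * α ^ 2)))) =
      -4 * α / (2 + α ^ 2) ∧
    (∫ z : ℝ, (z - (-4 * α / (2 + α ^ 2))) ^ 2 *
        (((1 - α * z) ^ 2 + 1) ^ 2 * phi z / ((2 + α ^ 2) * (2 + 3 * α ^ 2)))) =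
      (2 + 5 * α ^ 2) * (4 + 3 * α ^ 4) / ((2 + α ^ 2) ^ 2 * (2 + 3 * α ^ 2)) := by
  have h1 : (2 + α ^ 2) ≠ 0 := by positivity
  have h2 : (2 + 3 * α ^ 2) ≠ 0 := by positivity
  have hs : Real.sqrt (2 * Real.pi) ≠ 0 := by positivity
  constructor
  · have e : (fun z : ℝ => z * (((1 - α * z) ^ 2 + 1) ^ 2 * phi z / ((2 + α ^ 2) * (2 + 3 * α ^ 2))))
        = fun z : ℝ => (0 / ((Real.sqrt (2 * Real.pi)) * ((2 + α ^ 2) * (2 + 3 * α ^ 2))) + 4 / ((Real.sqrt (2 * Real.pi)) * ((2 + α ^ 2) * (2 + 3 * α ^ 2))) * z + (-8*α) / ((Real.sqrt (2 * Real.pi)) * ((2 + α ^ 2) * (2 + 3 * α ^ 2))) * z ^ 2 + (8*α^2) / ((Real.sqrt (2 * Real.pi)) * ((2 + α ^ 2) * (2 + 3 * α ^ 2))) * z ^ 3 + (-4*α^3) / ((Real.sqrt (2 * Real.pi)) * ((2 + α ^ 2) * (2 + 3 * α ^ 2))) * z ^ 4 + (α^4) / ((Real.sqrt (2 * Real.pi))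 * ((2 + α ^ 2) * (2 + 3 * α ^ 2))) * z ^ 5 + 0 / ((Real.sqrt (2 * Real.pi)) * ((2 + α ^ 2) * (2 + 3 * α ^ 2))) * z ^ 6) * Real.exp (-z ^ 2 / 2) := by
      funext z
      simp only [phi]
      field_simp
      ring
    rw [e, basn_key7]
    field_simp
    ring
  · have e : (fun z : ℝ => (z - (-4 * α / (2 + α ^ 2))) ^ 2 *
        (((1 - α * z) ^ 2 + 1) ^ 2 * phi z / ((2 + α ^ 2) * (2 + 3 * α ^ 2))))
        = fun z : ℝ => ((64*α^2) / ((Real.sqrt (2 * Real.pi)) * ((2 + α ^ 2) ^ 3 * (2 + 3 * α ^ 2))) + (64*α - 96*α^3) / ((Real.sqrt (2 * Real.pi)) * ((2 + α ^ 2) ^ 3 * (2 + 3 * α ^ 2))) * z + (16 - 112*α^2 + 68*α^4) / ((Real.sqrt (2 * Real.pi)) * ((2 + α ^ 2) ^ 3 * (2 + 3 * α ^ 2))) * z ^ 2 + (-32*α + 96*α^3 - 8*α^5) / ((Real.sqrt (2 * Real.pi)) * ((2 + α ^ 2) ^ 3 * (2 + 3 * α ^ 2))) * z ^ 3 + (32*α^2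 - 32*α^4 - 8*α^6) / ((Real.sqrt (2 * Real.pi)) * ((2 + α ^ 2) ^ 3 * (2 + 3 * α ^ 2))) * z ^ 4 + (-16*α^3 + 4*α^7) / ((Real.sqrt (2 * Real.pi)) * ((2 + α ^ 2) ^ 3 * (2 + 3 * α ^ 2))) * z ^ 5 + (4*α^4 + 4*α^6 + α^8) / ((Real.sqrt (2 * Real.pi)) * ((2 + α ^ 2) ^ 3 * (2 + 3 * α ^ 2))) * z ^ 6) * Real.exp (-z ^ 2 / 2) := by
      funext z
      simp only [phi]
      field_simp
      ring
    rw [e, basn_key7]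
    field_simp
    ring
end

section
/- Let α ∈ ℝ and let f(z; α) = ((1 − α z)² + 1)² φ(z) / ((2 + α²)(2 + 3α²)). For every real t, the moment generating function satisfies ∫_ℝ e^{t z} f(z; α) dz = e^{t²/2} · (α⁴ t⁴ + 6α⁴ t² + 3α⁴ − 4α³ t³ − 12α³ t + 8α² t² + 8α² − 8α t + 4) / ((2 + α²)(2 + 3α²)). -/
open MeasureTheory Real Filter Topology

/-- Integrability of `x ^ n * exp (-x²/2)` for `n ≤ 4`. -/
lemma gauss_pow_integrable (n : ℕ) (hn : n ≤ 4) :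
    Integrable fun x : ℝ => x ^ n * Real.exp (-(2⁻¹ : ℝ) * x ^ 2) := by
  apply Integrable.mono' ((integrable_exp_neg_mul_sq (by norm_num : (0:ℝ) < 4⁻¹)).const_mul 64)
  · exact (Continuous.mul (continuous_pow n)
      ((continuous_const.mul (continuous_pow 2)).rexp)).aestronglyMeasurable
  · filter_upwards with x
    have h8 : x ^ 2 / 8 + 1 ≤ Real.exp (x ^ 2 / 8) := Real.add_one_le_exp _
    have hpos : (0:ℝ) ≤ x ^ 2 / 8 + 1 := by positivity
    have hsq : (x ^ 2 / 8 + 1) ^ 2 ≤ Real.exp (x ^ 2 / 8) ^ 2 := by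
      exact pow_le_pow_left₀ hpos h8 2
    have hexp : Real.exp (x ^ 2 / 8) ^ 2 = Real.exp ((4⁻¹ : ℝ) * x ^ 2) := by
      rw [sq, ← Real.exp_add]; ring_nf
    have h14 : 1 + x ^ 4 ≤ 64 * Real.exp ((4⁻¹ : ℝ) * x ^ 2) := by
      rw [← hexp]; nlinarith [hsq, sq_nonneg x]
    have habs : |x| ^ n ≤ 1 + x ^ 4 := by
      have hx : (0:ℝ) ≤ |x| := abs_nonneg x
      have hx4 : |x| ^ 4 = x ^ 4 := by rw [← abs_pow, abs_of_nonneg (by positivity)]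
      interval_cases n
      · simpa using by positivity
      · nlinarith [sq_nonneg (|x| - 1), sq_nonneg (|x| ^ 2 - 1), sq_nonneg (|x| + 1)]
      · nlinarith [sq_nonneg (|x| ^ 2 - 1)]
      · nlinarith [sq_nonneg (|x| ^ 2 - |x|), sq_nonneg (|x| - 1), sq_nonneg (|x| + 1)]
      · nlinarith
    have hex : (0:ℝ) < Real.exp (-(2⁻¹ : ℝ) * x ^ 2) := Real.exp_pos _
    calc ‖x ^ n * Real.exp (-(2⁻¹:ℝ) * x ^ 2)‖
        = |x| ^ n * Real.exp (-(2⁻¹:ℝ) * x ^ 2) := by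
          rw [norm_mul, Real.norm_eq_abs, Real.norm_eq_abs, abs_pow,
            abs_of_pos (Real.exp_pos _)]
      _ ≤ (1 + x ^ 4) * Real.exp (-(2⁻¹:ℝ) * x ^ 2) := by
          exact mul_le_mul_of_nonneg_right habs hex.le
      _ ≤ (64 * Real.exp ((4⁻¹:ℝ) * x ^ 2)) * Real.exp (-(2⁻¹:ℝ) * x ^ 2) := by
          exact mul_le_mul_of_nonneg_right h14 hex.le
      _ = 64 * Real.exp (-(4⁻¹:ℝ) * x ^ 2) := by
          rw [mul_assoc, ← Real.exp_add]; ring_nf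

/-- `x ^ n * exp(-x²/2)` tends to zero at cocompact. -/
lemma gauss_pow_tendsto (n : ℕ) :
    Tendsto (fun x : ℝ => x ^ n * Real.exp (-(2⁻¹ : ℝ) * x ^ 2)) (cocompact ℝ) (𝓝 0) := by
  rw [tendsto_zero_iff_abs_tendsto_zero]
  have h := tendsto_rpow_abs_mul_exp_neg_mul_sq_cocompact (by norm_num : (0:ℝ) < 2⁻¹) n
  convert h using 1
  funext x
  simp only [Function.comp_apply, abs_mul, abs_pow, Real.abs_exp, Real.rpow_natCast]

lemma gauss_pow_tendsto_atTop (n : ℕ) :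
    Tendsto (fun x : ℝ => x ^ n * Real.exp (-(2⁻¹ : ℝ) * x ^ 2)) atTop (𝓝 0) := by
  refine (gauss_pow_tendsto n).mono_left ?_
  rw [cocompact_eq_atBot_atTop]
  exact le_sup_right

lemma gauss_pow_tendsto_atBot (n : ℕ) :
    Tendsto (fun x : ℝ => x ^ n * Real.exp (-(2⁻¹ : ℝ) * x ^ 2)) atBot (𝓝 0) := by
  refine (gauss_pow_tendsto n).mono_left ?_
  rw [cocompact_eq_atBot_atTop]
  exact le_sup_left

lemma gauss_J0 : (∫ x : ℝ, Real.exp (-(2⁻¹ : ℝ) * x ^ 2)) = Real.sqrt (2 * Real.pi) := by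
  rw [integral_gaussian]
  rw [show Real.pi / 2⁻¹ = 2 * Real.pi by ring]

lemma gauss_J1 : (∫ x : ℝ, x ^ 1 * Real.exp (-(2⁻¹ : ℝ) * x ^ 2)) = 0 := by
  have hderiv : ∀ x : ℝ, HasDerivAt (fun y : ℝ => -Real.exp (-(2⁻¹ : ℝ) * y ^ 2))
      (x ^ 1 * Real.exp (-(2⁻¹ : ℝ) * x ^ 2)) x := by
    intro x
    have h2 : HasDerivAt (fun y : ℝ => Real.exp (-(2⁻¹ : ℝ) * y ^ 2))
        (-(2⁻¹ : ℝ) * (2 * x) * Real.exp (-(2⁻¹ : ℝ) * x ^ 2)) x := by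
      have := ((hasDerivAt_pow 2 x).const_mul (-(2⁻¹ : ℝ))).exp
      convert this using 1; ring
    have := h2.neg
    exact this.congr_deriv (by ring)
  have htop : Tendsto (fun y : ℝ => -Real.exp (-(2⁻¹ : ℝ) * y ^ 2)) atTop (𝓝 0) := by
    have := (gauss_pow_tendsto_atTop 0).neg
    convert this using 1
    · funext y; ring
    · norm_num
  have hbot : Tendsto (fun y : ℝ => -Real.exp (-(2⁻¹ : ℝ) * y ^ 2)) atBot (𝓝 0) := by
    have := (gauss_pow_tendsto_atBot 0).neg
    convert this using 1
    · funext y; ring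
    · norm_num
  have h := integral_of_hasDerivAt_of_tendsto hderiv (gauss_pow_integrable 1 (by norm_num))
    hbot htop
  simpa using h

lemma gauss_hd2 (x : ℝ) : HasDerivAt (fun y : ℝ => -y * Real.exp (-(2⁻¹ : ℝ) * y ^ 2))
    ((x ^ 2 - 1) * Real.exp (-(2⁻¹ : ℝ) * x ^ 2)) x := by
  have h1 : HasDerivAt (fun y : ℝ => -y) (-1) x := (hasDerivAt_id x).neg
  have h2 : HasDerivAt (fun y : ℝ => Real.exp (-(2⁻¹ : ℝ) * y ^ 2))
      (-(2⁻¹ : ℝ) * (2 * x) * Real.exp (-(2⁻¹ : ℝ) * x ^ 2)) x := by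
    have := ((hasDerivAt_pow 2 x).const_mul (-(2⁻¹ : ℝ))).exp
    convert this using 1; ring
  have := h1.mul h2
  exact this.congr_deriv (by ring)

lemma gauss_J2 : (∫ x : ℝ, x ^ 2 * Real.exp (-(2⁻¹ : ℝ) * x ^ 2)) = Real.sqrt (2 * Real.pi) := by
  have hint : Integrable fun x : ℝ => (x ^ 2 - 1) * Real.exp (-(2⁻¹ : ℝ) * x ^ 2) := by
    exact ((gauss_pow_integrable 2 (by norm_num)).sub
      (gauss_pow_integrable 0 (by norm_num))).congr
      (Filter.Eventually.of_forall fun x => by simp [Pi.sub_apply]; ring)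
  have htop : Tendsto (fun y : ℝ => -y * Real.exp (-(2⁻¹ : ℝ) * y ^ 2)) atTop (𝓝 0) := by
    have := (gauss_pow_tendsto_atTop 1).neg
    convert this using 1
    · funext y; ring
    · norm_num
  have hbot : Tendsto (fun y : ℝ => -y * Real.exp (-(2⁻¹ : ℝ) * y ^ 2)) atBot (𝓝 0) := by
    have := (gauss_pow_tendsto_atBot 1).neg
    convert this using 1
    · funext y; ring
    · norm_num
  have h := integral_of_hasDerivAt_of_tendsto gauss_hd2 hint hbot htop
  have hsplit : (∫ x : ℝ, (x ^ 2 - 1) * Real.exp (-(2⁻¹ : ℝ) * x ^ 2)) =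
      (∫ x : ℝ, x ^ 2 * Real.exp (-(2⁻¹ : ℝ) * x ^ 2)) -
      (∫ x : ℝ, Real.exp (-(2⁻¹ : ℝ) * x ^ 2)) := by
    rw [← integral_sub (gauss_pow_integrable 2 (by norm_num))
      (by simpa using gauss_pow_integrable 0 (by norm_num))]
    congr 1 with x; ring
  rw [hsplit, gauss_J0] at h
  linarith [h]

lemma gauss_hd3 (x : ℝ) : HasDerivAt (fun y : ℝ => -(y ^ 2 + 2) * Real.exp (-(2⁻¹ : ℝ) * y ^ 2))
    (x ^ 3 * Real.exp (-(2⁻¹ : ℝ) * x ^ 2)) x := by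
  have h1 : HasDerivAt (fun y : ℝ => -(y ^ 2 + 2)) (-(2 * x)) x := by
    exact ((hasDerivAt_pow 2 x).add_const 2).neg.congr_deriv (by norm_num)
  have h2 : HasDerivAt (fun y : ℝ => Real.exp (-(2⁻¹ : ℝ) * y ^ 2))
      (-(2⁻¹ : ℝ) * (2 * x) * Real.exp (-(2⁻¹ : ℝ) * x ^ 2)) x := by
    have := ((hasDerivAt_pow 2 x).const_mul (-(2⁻¹ : ℝ))).exp
    convert this using 1; ring
  have := h1.mul h2
  exact this.congr_deriv (by ring)

lemma gauss_J3 : (∫ x : ℝ, x ^ 3 * Real.exp (-(2⁻¹ : ℝ) * x ^ 2)) = 0 := by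
  have htop : Tendsto (fun y : ℝ => -(y ^ 2 + 2) * Real.exp (-(2⁻¹ : ℝ) * y ^ 2))
      atTop (𝓝 0) := by
    have := ((gauss_pow_tendsto_atTop 2).add ((gauss_pow_tendsto_atTop 0).const_mul 2)).neg
    convert this using 1
    · funext y; ring
    · norm_num
  have hbot : Tendsto (fun y : ℝ => -(y ^ 2 + 2) * Real.exp (-(2⁻¹ : ℝ) * y ^ 2))
      atBot (𝓝 0) := by
    have := ((gauss_pow_tendsto_atBot 2).add ((gauss_pow_tendsto_atBot 0).const_mul 2)).neg
    convert this using 1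
    · funext y; ring
    · norm_num
  have h := integral_of_hasDerivAt_of_tendsto gauss_hd3 (gauss_pow_integrable 3 (by norm_num))
    hbot htop
  simpa using h

lemma gauss_hd4 (x : ℝ) :
    HasDerivAt (fun y : ℝ => -(y ^ 3 + 3 * y) * Real.exp (-(2⁻¹ : ℝ) * y ^ 2))
    ((x ^ 4 - 3 * x ^ 2) * Real.exp (-(2⁻¹ : ℝ) * x ^ 2)
      + (3 * x ^ 2 - 3) * Real.exp (-(2⁻¹ : ℝ) * x ^ 2)) x := by
  have h1 : HasDerivAt (fun y : ℝ => -(y ^ 3 + 3 * y)) (-(3 * x ^ 2 + 3)) x := by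
    have := ((hasDerivAt_pow 3 x).add ((hasDerivAt_id x).const_mul 3)).neg
    exact this.congr_deriv (by push_cast; ring)
  have h2 : HasDerivAt (fun y : ℝ => Real.exp (-(2⁻¹ : ℝ) * y ^ 2))
      (-(2⁻¹ : ℝ) * (2 * x) * Real.exp (-(2⁻¹ : ℝ) * x ^ 2)) x := by
    have := ((hasDerivAt_pow 2 x).const_mul (-(2⁻¹ : ℝ))).exp
    convert this using 1; ring
  have := h1.mul h2
  exact this.congr_deriv (by ring)

lemma gauss_J4 :
    (∫ x : ℝ, x ^ 4 * Real.exp (-(2⁻¹ : ℝ) * x ^ 2)) = 3 * Real.sqrt (2 * Real.pi) := by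
  have hint : Integrable fun x : ℝ => (x ^ 4 - 3 * x ^ 2) * Real.exp (-(2⁻¹ : ℝ) * x ^ 2)
      + (3 * x ^ 2 - 3) * Real.exp (-(2⁻¹ : ℝ) * x ^ 2) := by
    have h4 := gauss_pow_integrable 4 (by norm_num)
    have h2 := gauss_pow_integrable 2 (by norm_num)
    have h0 := gauss_pow_integrable 0 (by norm_num)
    exact ((h4.sub (h2.const_mul 3)).add ((h2.const_mul 3).sub (h0.const_mul 3))).congr
      (Filter.Eventually.of_forall fun x => by simp [Pi.sub_apply, Pi.add_apply]; ring)
  have htop : Tendsto (fun y : ℝ => -(y ^ 3 + 3 * y) * Real.exp (-(2⁻¹ : ℝ) * y ^ 2))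
      atTop (𝓝 0) := by
    have := ((gauss_pow_tendsto_atTop 3).add ((gauss_pow_tendsto_atTop 1).const_mul 3)).neg
    convert this using 1
    · funext y; ring
    · norm_num
  have hbot : Tendsto (fun y : ℝ => -(y ^ 3 + 3 * y) * Real.exp (-(2⁻¹ : ℝ) * y ^ 2))
      atBot (𝓝 0) := by
    have := ((gauss_pow_tendsto_atBot 3).add ((gauss_pow_tendsto_atBot 1).const_mul 3)).neg
    convert this using 1
    · funext y; ring
    · norm_num
  have h := integral_of_hasDerivAt_of_tendsto gauss_hd4 hint hbot htop
  have hsplit : (∫ x : ℝ, (x ^ 4 - 3 * x ^ 2) * Real.exp (-(2⁻¹ : ℝ) * x ^ 2)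
      + (3 * x ^ 2 - 3) * Real.exp (-(2⁻¹ : ℝ) * x ^ 2)) =
      (∫ x : ℝ, x ^ 4 * Real.exp (-(2⁻¹ : ℝ) * x ^ 2))
      - 3 * (∫ x : ℝ, Real.exp (-(2⁻¹ : ℝ) * x ^ 2)) := by
    have h4 := gauss_pow_integrable 4 (by norm_num)
    have h0' : Integrable fun x : ℝ => Real.exp (-(2⁻¹ : ℝ) * x ^ 2) := by
      simpa using gauss_pow_integrable 0 (by norm_num)
    rw [show (3 : ℝ) * (∫ x : ℝ, Real.exp (-(2⁻¹ : ℝ) * x ^ 2))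
        = ∫ x : ℝ, 3 * Real.exp (-(2⁻¹ : ℝ) * x ^ 2) from (integral_const_mul 3 _).symm,
      ← integral_sub h4 (h0'.const_mul 3)]
    congr 1 with x; ring
  rw [hsplit, gauss_J0] at h
  linarith [h]

/-- Integral of a degree-4 polynomial against the (unnormalized) Gaussian. -/
lemma gauss_poly_integral (a b c d e : ℝ) :
    (∫ y : ℝ, (a * y ^ 4 + b * y ^ 3 + c * y ^ 2 + d * y + e) *
        Real.exp (-(2⁻¹ : ℝ) * y ^ 2)) =
      (3 * a + c + e) * Real.sqrt (2 * Real.pi) := by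
  have h4 := gauss_pow_integrable 4 (by norm_num)
  have h3 := gauss_pow_integrable 3 (by norm_num)
  have h2 := gauss_pow_integrable 2 (by norm_num)
  have h1 := gauss_pow_integrable 1 (by norm_num)
  have h0 := gauss_pow_integrable 0 (by norm_num)
  have key : (fun y : ℝ => (a * y ^ 4 + b * y ^ 3 + c * y ^ 2 + d * y + e) *
      Real.exp (-(2⁻¹ : ℝ) * y ^ 2)) =
      fun y : ℝ => a * (y ^ 4 * Real.exp (-(2⁻¹:ℝ) * y ^ 2))
        + (b * (y ^ 3 * Real.exp (-(2⁻¹:ℝ) * y ^ 2))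
        + (c * (y ^ 2 * Real.exp (-(2⁻¹:ℝ) * y ^ 2))
        + (d * (y ^ 1 * Real.exp (-(2⁻¹:ℝ) * y ^ 2))
        + e * (y ^ 0 * Real.exp (-(2⁻¹:ℝ) * y ^ 2))))) := by
    funext y; ring
  rw [key]
  have E2 : Integrable (fun y : ℝ => d * (y ^ 1 * Real.exp (-(2⁻¹:ℝ) * y ^ 2))
      + e * (y ^ 0 * Real.exp (-(2⁻¹:ℝ) * y ^ 2))) volume :=
    (h1.const_mul d).add (h0.const_mul e)
  have E3 : Integrable (fun y : ℝ => c * (y ^ 2 * Real.exp (-(2⁻¹:ℝ) * y ^ 2))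
      + (d * (y ^ 1 * Real.exp (-(2⁻¹:ℝ) * y ^ 2))
        + e * (y ^ 0 * Real.exp (-(2⁻¹:ℝ) * y ^ 2)))) volume :=
    (h2.const_mul c).add E2
  have E4 : Integrable (fun y : ℝ => b * (y ^ 3 * Real.exp (-(2⁻¹:ℝ) * y ^ 2))
      + (c * (y ^ 2 * Real.exp (-(2⁻¹:ℝ) * y ^ 2))
        + (d * (y ^ 1 * Real.exp (-(2⁻¹:ℝ) * y ^ 2))
          + e * (y ^ 0 * Real.exp (-(2⁻¹:ℝ) * y ^ 2))))) volume :=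
    (h3.const_mul b).add E3
  rw [integral_add (h4.const_mul a) E4, integral_add (h3.const_mul b) E3,
    integral_add (h2.const_mul c) E2, integral_add (h1.const_mul d) (h0.const_mul e),
    integral_const_mul, integral_const_mul, integral_const_mul, integral_const_mul,
    integral_const_mul]
  have hJ0 : (∫ x : ℝ, x ^ 0 * Real.exp (-(2⁻¹ : ℝ) * x ^ 2)) = Real.sqrt (2 * Real.pi) := by
    simpa using gauss_J0
  rw [gauss_J4, gauss_J3, gauss_J2, gauss_J1, hJ0]
  ring

theorem basn2_mgf (α t : ℝ) :
    (∫ z : ℝ, Real.exp (t * z) *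
        (((1 - α * z) ^ 2 + 1) ^ 2 * phi z / ((2 + α ^ 2) * (2 + 3 * α ^ 2)))) =
      Real.exp (t ^ 2 / 2) *
        (α ^ 4 * t ^ 4 + 6 * α ^ 4 * t ^ 2 + 3 * α ^ 4 - 4 * α ^ 3 * t ^ 3 - 12 * α ^ 3 * t +
          8 * α ^ 2 * t ^ 2 + 8 * α ^ 2 - 8 * α * t + 4) /
        ((2 + α ^ 2) * (2 + 3 * α ^ 2)) := by
  set D : ℝ := (2 + α ^ 2) * (2 + 3 * α ^ 2) with hD
  set A4 : ℝ := α ^ 4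
  set A3 : ℝ := 4 * α ^ 4 * t - 4 * α ^ 3
  set A2 : ℝ := 6 * α ^ 4 * t ^ 2 - 12 * α ^ 3 * t + 8 * α ^ 2
  set A1 : ℝ := 4 * α ^ 4 * t ^ 3 - 12 * α ^ 3 * t ^ 2 + 16 * α ^ 2 * t - 8 * α
  set A0 : ℝ := α ^ 4 * t ^ 4 - 4 * α ^ 3 * t ^ 3 + 8 * α ^ 2 * t ^ 2 - 8 * α * t + 4
  set C : ℝ := Real.exp (t ^ 2 / 2) / D * (Real.sqrt (2 * Real.pi))⁻¹ with hC
  set g : ℝ → ℝ := fun y =>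
    (A4 * y ^ 4 + A3 * y ^ 3 + A2 * y ^ 2 + A1 * y + A0) * Real.exp (-(2⁻¹ : ℝ) * y ^ 2) with hg
  have hfg : (fun z : ℝ => Real.exp (t * z) *
      (((1 - α * z) ^ 2 + 1) ^ 2 * phi z / D)) = fun z => C * g (z - t) := by
    funext z
    unfold phi
    rw [hg, hC]
    have hexp : Real.exp (t * z) * Real.exp (-z ^ 2 / 2)
        = Real.exp (t ^ 2 / 2) * Real.exp (-(2⁻¹ : ℝ) * (z - t) ^ 2) := by
      rw [← Real.exp_add, ← Real.exp_add]; ring_nf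
    have hpoly : ((1 - α * z) ^ 2 + 1) ^ 2
        = A4 * (z - t) ^ 4 + A3 * (z - t) ^ 3 + A2 * (z - t) ^ 2 + A1 * (z - t) + A0 := by
      simp only [A4, A3, A2, A1, A0]; ring
    calc Real.exp (t * z) * (((1 - α * z) ^ 2 + 1) ^ 2 *
            ((Real.sqrt (2 * Real.pi))⁻¹ * Real.exp (-z ^ 2 / 2)) / D)
        = (((1 - α * z) ^ 2 + 1) ^ 2 * (Real.sqrt (2 * Real.pi))⁻¹ / D) *
            (Real.exp (t * z) * Real.exp (-z ^ 2 / 2)) := by ring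
      _ = (((1 - α * z) ^ 2 + 1) ^ 2 * (Real.sqrt (2 * Real.pi))⁻¹ / D) *
            (Real.exp (t ^ 2 / 2) * Real.exp (-(2⁻¹ : ℝ) * (z - t) ^ 2)) := by rw [hexp]
      _ = Real.exp (t ^ 2 / 2) / D * (Real.sqrt (2 * Real.pi))⁻¹ *
            (((1 - α * z) ^ 2 + 1) ^ 2 * Real.exp (-(2⁻¹ : ℝ) * (z - t) ^ 2)) := by ring
      _ = _ := by rw [hpoly]
  rw [hfg]
  rw [integral_const_mul]
  rw [show (∫ z : ℝ, g (z - t)) = ∫ z : ℝ, g z from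
    integral_sub_right_eq_self g t]
  rw [hg, gauss_poly_integral]
  have hs : Real.sqrt (2 * Real.pi) ≠ 0 := by
    positivity
  rw [hC]
  have hnum : 3 * A4 + A2 + A0 =
      α ^ 4 * t ^ 4 + 6 * α ^ 4 * t ^ 2 + 3 * α ^ 4 - 4 * α ^ 3 * t ^ 3 - 12 * α ^ 3 * t +
        8 * α ^ 2 * t ^ 2 + 8 * α ^ 2 - 8 * α * t + 4 := by
    simp only [A4, A2, A0]; ring
  field_simp
  simp only [A4, A2, A0]
  ring
end

section
/- Let α ∈ ℝ. For every real t, ∫_ℝ e^{t z} (α⁴ z⁴ + 8α² z² + 4) φ(z) / ((2 + α²)(2 + 3α²)) dz = e^{t²/2} · (α⁴ t⁴ + 6α⁴ t² + 3α⁴ + 8α² t² + 8α² + 4) / ((2 + α²)(2 + 3α²)). That is, the moment generating function of the symmetric component SCBASN₂(α) equals e^{t²/2}(α⁴t⁴ + 6α⁴t² + 3α⁴ + 8α²t² + 8α² + 4)/((2+α²)(2+3α²)). -/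
open MeasureTheory

open Real Filter in
lemma integrable_pow_gauss (n : ℕ) : Integrable fun u : ℝ => u ^ n * Real.exp (-u ^ 2 / 2) := by
  have hs : (-1 : ℝ) < n := by
    have : (0:ℝ) ≤ n := Nat.cast_nonneg n
    linarith
  have h := integrable_rpow_mul_exp_neg_mul_sq (b := 1/2) (by norm_num) hs
  refine h.congr (Eventually.of_forall fun u => ?_)
  simp only [Real.rpow_natCast]
  congr 1
  ring

lemma hasDerivAt_gaussE (u : ℝ) :
    HasDerivAt (fun u : ℝ => Real.exp (-u ^ 2 / 2)) (-u * Real.exp (-u ^ 2 / 2)) u := by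
  have h1 : HasDerivAt (fun u : ℝ => -u ^ 2 / 2) (-u) u := by
    have := ((hasDerivAt_pow 2 u).neg).div_const 2
    simpa using this.congr_deriv (by ring)
  simpa [mul_comm] using h1.exp

lemma gauss_moment_zero : ∫ u : ℝ, Real.exp (-u ^ 2 / 2) = Real.sqrt (2 * Real.pi) := by
  have h : (fun u : ℝ => Real.exp (-u ^ 2 / 2)) = fun u : ℝ => Real.exp (-(1/2) * u ^ 2) := by
    funext u; congr 1; ring
  rw [h, integral_gaussian, show Real.pi / (1/2) = 2 * Real.pi by ring]

open Filter in
lemma gauss_moment_one : ∫ u : ℝ, u * Real.exp (-u ^ 2 / 2) = 0 := by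
  have hint : Integrable (fun u : ℝ => -u * Real.exp (-u ^ 2 / 2)) := by
    refine (integrable_pow_gauss 1).neg.congr (Eventually.of_forall fun u => ?_)
    simp [pow_one]
  have h := integral_eq_zero_of_hasDerivAt_of_integrable (fun u => hasDerivAt_gaussE u) hint
    (by simpa using integrable_pow_gauss 0)
  have h2 : ∫ u : ℝ, -u * Real.exp (-u ^ 2 / 2) = -∫ u : ℝ, u * Real.exp (-u ^ 2 / 2) := by
    simp_rw [neg_mul]; exact integral_neg _
  rw [h2, neg_eq_zero] at h
  exact h

open Filter in
lemma gauss_moment_step (m : ℕ) :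
    ∫ u : ℝ, u ^ (m + 2) * Real.exp (-u ^ 2 / 2)
      = (m + 1 : ℝ) * ∫ u : ℝ, u ^ m * Real.exp (-u ^ 2 / 2) := by
  have hderiv : ∀ u : ℝ, HasDerivAt (fun u : ℝ => u ^ (m + 1) * Real.exp (-u ^ 2 / 2))
      ((m + 1 : ℝ) * u ^ m * Real.exp (-u ^ 2 / 2) - u ^ (m + 2) * Real.exp (-u ^ 2 / 2)) u := by
    intro u
    have h := (hasDerivAt_pow (m + 1) u).mul (hasDerivAt_gaussE u)
    have e : (↑(m + 1) : ℝ) * u ^ (m + 1 - 1) * Real.exp (-u ^ 2 / 2)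
        + u ^ (m + 1) * (-u * Real.exp (-u ^ 2 / 2))
        = (m + 1 : ℝ) * u ^ m * Real.exp (-u ^ 2 / 2) - u ^ (m + 2) * Real.exp (-u ^ 2 / 2) := by
      rw [Nat.add_sub_cancel]
      push_cast
      ring
    rw [e] at h
    exact h
  have hint1 : Integrable (fun u : ℝ => (m + 1 : ℝ) * u ^ m * Real.exp (-u ^ 2 / 2)) := by
    refine ((integrable_pow_gauss m).const_mul (m + 1 : ℝ)).congr (Eventually.of_forall fun u => ?_)
    ring
  have hint2 := integrable_pow_gauss (m + 2)
  have h := integral_eq_zero_of_hasDerivAt_of_integrable hderiv (hint1.sub hint2)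
    (integrable_pow_gauss (m + 1))
  rw [integral_sub hint1 hint2, sub_eq_zero] at h
  rw [← h]
  simp_rw [mul_assoc]
  exact MeasureTheory.integral_const_mul ((m:ℝ)+1) (fun u : ℝ => u ^ m * Real.exp (-u ^ 2 / 2))

lemma integral_quartic_gauss (a b c d e : ℝ) :
    ∫ u : ℝ, (a * u ^ 4 + b * u ^ 3 + c * u ^ 2 + d * u + e) * Real.exp (-u ^ 2 / 2)
      = (3 * a + c + e) * Real.sqrt (2 * Real.pi) := by
  have I : ∀ (k : ℕ) (r : ℝ), Integrable (fun u : ℝ => r * (u ^ k * Real.exp (-u ^ 2 / 2))) :=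
    fun k r => (integrable_pow_gauss k).const_mul r
  have key : (fun u : ℝ => (a * u ^ 4 + b * u ^ 3 + c * u ^ 2 + d * u + e) * Real.exp (-u ^ 2 / 2))
      = fun u : ℝ => a * (u ^ 4 * Real.exp (-u ^ 2 / 2)) + (b * (u ^ 3 * Real.exp (-u ^ 2 / 2))
        + (c * (u ^ 2 * Real.exp (-u ^ 2 / 2)) + (d * (u ^ 1 * Real.exp (-u ^ 2 / 2))
        + e * (u ^ 0 * Real.exp (-u ^ 2 / 2))))) := by
    funext u; ring
  have J1 : Integrable (fun u : ℝ => d * (u ^ 1 * Real.exp (-u ^ 2 / 2))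
      + e * (u ^ 0 * Real.exp (-u ^ 2 / 2))) := (I 1 d).add (I 0 e)
  have J2 : Integrable (fun u : ℝ => c * (u ^ 2 * Real.exp (-u ^ 2 / 2))
      + (d * (u ^ 1 * Real.exp (-u ^ 2 / 2)) + e * (u ^ 0 * Real.exp (-u ^ 2 / 2)))) :=
    (I 2 c).add J1
  have J3 : Integrable (fun u : ℝ => b * (u ^ 3 * Real.exp (-u ^ 2 / 2))
      + (c * (u ^ 2 * Real.exp (-u ^ 2 / 2)) + (d * (u ^ 1 * Real.exp (-u ^ 2 / 2))
      + e * (u ^ 0 * Real.exp (-u ^ 2 / 2))))) := (I 3 b).add J2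
  rw [key, MeasureTheory.integral_add (I 4 a) J3,
    MeasureTheory.integral_add (I 3 b) J2,
    MeasureTheory.integral_add (I 2 c) J1,
    MeasureTheory.integral_add (I 1 d) (I 0 e),
    MeasureTheory.integral_const_mul, MeasureTheory.integral_const_mul,
    MeasureTheory.integral_const_mul, MeasureTheory.integral_const_mul,
    MeasureTheory.integral_const_mul]
  have M0 : ∫ u : ℝ, u ^ 0 * Real.exp (-u ^ 2 / 2) = Real.sqrt (2 * Real.pi) := by
    simpa using gauss_moment_zero
  have M1 : ∫ u : ℝ, u ^ 1 * Real.exp (-u ^ 2 / 2) = 0 := by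
    simpa using gauss_moment_one
  have M2 : ∫ u : ℝ, u ^ 2 * Real.exp (-u ^ 2 / 2) = Real.sqrt (2 * Real.pi) := by
    have h := gauss_moment_step 0
    rw [M0] at h
    simpa using h
  have M3 : ∫ u : ℝ, u ^ 3 * Real.exp (-u ^ 2 / 2) = 0 := by
    have h := gauss_moment_step 1
    norm_num at h
    rw [h, gauss_moment_one]
    ring
  have M4 : ∫ u : ℝ, u ^ 4 * Real.exp (-u ^ 2 / 2) = 3 * Real.sqrt (2 * Real.pi) := by
    have h := gauss_moment_step 2
    norm_num at h
    rw [h, M2]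
  rw [M0, M1, M2, M3, M4]
  ring

theorem scbasn2_mgf (α t : ℝ) :
    (∫ z : ℝ, Real.exp (t * z) *
        ((α ^ 4 * z ^ 4 + 8 * α ^ 2 * z ^ 2 + 4) * phi z / ((2 + α ^ 2) * (2 + 3 * α ^ 2)))) =
      Real.exp (t ^ 2 / 2) *
        (α ^ 4 * t ^ 4 + 6 * α ^ 4 * t ^ 2 + 3 * α ^ 4 + 8 * α ^ 2 * t ^ 2 + 8 * α ^ 2 + 4) /
        ((2 + α ^ 2) * (2 + 3 * α ^ 2)) := by
  have hS : Real.sqrt (2 * Real.pi) ≠ 0 := by positivity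
  have hD : ((2:ℝ) + α ^ 2) * (2 + 3 * α ^ 2) ≠ 0 := by positivity
  have step1 : (∫ z : ℝ, Real.exp (t * z) *
        ((α ^ 4 * z ^ 4 + 8 * α ^ 2 * z ^ 2 + 4) * phi z / ((2 + α ^ 2) * (2 + 3 * α ^ 2))))
      = ((Real.sqrt (2 * Real.pi))⁻¹ / ((2 + α ^ 2) * (2 + 3 * α ^ 2)) * Real.exp (t ^ 2 / 2)) *
        ∫ z : ℝ, (α ^ 4 * z ^ 4 + 8 * α ^ 2 * z ^ 2 + 4) * Real.exp (-(z - t) ^ 2 / 2) := by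
    rw [← MeasureTheory.integral_const_mul]
    congr 1
    funext z
    rw [phi]
    have hx : Real.exp (t * z) * Real.exp (-z ^ 2 / 2)
        = Real.exp (t ^ 2 / 2) * Real.exp (-(z - t) ^ 2 / 2) := by
      rw [← Real.exp_add, ← Real.exp_add]
      congr 1
      ring
    field_simp
    simp only [neg_div] at hx
    linear_combination hx
  have step2 : (∫ z : ℝ, (α ^ 4 * z ^ 4 + 8 * α ^ 2 * z ^ 2 + 4) * Real.exp (-(z - t) ^ 2 / 2))
      = ∫ u : ℝ, (α ^ 4 * (u + t) ^ 4 + 8 * α ^ 2 * (u + t) ^ 2 + 4) * Real.exp (-u ^ 2 / 2) := by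
    rw [← MeasureTheory.integral_add_right_eq_self
      (fun z => (α ^ 4 * z ^ 4 + 8 * α ^ 2 * z ^ 2 + 4) * Real.exp (-(z - t) ^ 2 / 2)) t]
    congr 1
    funext u
    simp [add_sub_cancel_right]
  have step3 : (∫ u : ℝ, (α ^ 4 * (u + t) ^ 4 + 8 * α ^ 2 * (u + t) ^ 2 + 4) * Real.exp (-u ^ 2 / 2))
      = (3 * α ^ 4 + (6 * α ^ 4 * t ^ 2 + 8 * α ^ 2)
          + (α ^ 4 * t ^ 4 + 8 * α ^ 2 * t ^ 2 + 4)) * Real.sqrt (2 * Real.pi) := by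
    have h := integral_quartic_gauss (α ^ 4) (4 * α ^ 4 * t) (6 * α ^ 4 * t ^ 2 + 8 * α ^ 2)
      (4 * α ^ 4 * t ^ 3 + 16 * α ^ 2 * t) (α ^ 4 * t ^ 4 + 8 * α ^ 2 * t ^ 2 + 4)
    rw [← h]
    congr 1
    funext u
    ring
  rw [step1, step2, step3]
  field_simp
  ring
end

section
/- For every fixed real z, the Balakrishnan alpha skew normal density converges pointwise as α → +∞ (and as α → −∞) to the bimodal normal BN(4) density: lim_{α → ±∞} ((1 − α z)² + 1)² φ(z) / ((2 + α²)(2 + 3α²)) = z⁴ φ(z) / 3. -/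
open MeasureTheory

theorem basn2_pdf_limit (z : ℝ) :
    Filter.Tendsto
      (fun α : ℝ => ((1 - α * z) ^ 2 + 1) ^ 2 * phi z / ((2 + α ^ 2) * (2 + 3 * α ^ 2)))
      Filter.atTop (nhds (z ^ 4 * phi z / 3)) ∧
    Filter.Tendsto
      (fun α : ℝ => ((1 - α * z) ^ 2 + 1) ^ 2 * phi z / ((2 + α ^ 2) * (2 + 3 * α ^ 2)))
      Filter.atBot (nhds (z ^ 4 * phi z / 3)) := by
  set g : ℝ → ℝ := fun u => ((u - z) ^ 2 + u ^ 2) ^ 2 * phi z / ((2 * u ^ 2 + 1) * (2 * u ^ 2 + 3))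
    with hgdef
  have hcont : ContinuousAt g 0 := by
    apply ContinuousAt.div
    · fun_prop
    · fun_prop
    · norm_num
  have hg0 : g 0 = z ^ 4 * phi z / 3 := by
    simp only [hgdef]
    ring_nf
  have hg : Filter.Tendsto g (nhds 0) (nhds (z ^ 4 * phi z / 3)) := by
    rw [← hg0]; exact hcont.tendsto
  have heq : ∀ α : ℝ, α ≠ 0 →
      ((1 - α * z) ^ 2 + 1) ^ 2 * phi z / ((2 + α ^ 2) * (2 + 3 * α ^ 2)) = g α⁻¹ := by
    intro α hα
    have h1 : (2 + α ^ 2) * (2 + 3 * α ^ 2) ≠ 0 := by positivity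
    have h2 : (2 * (α⁻¹) ^ 2 + 1) * (2 * (α⁻¹) ^ 2 + 3) ≠ 0 := by positivity
    simp only [hgdef]
    field_simp
  constructor
  · apply Filter.Tendsto.congr' _ (hg.comp tendsto_inv_atTop_zero)
    filter_upwards [Filter.eventually_gt_atTop 0] with α hα
    exact (heq α (ne_of_gt hα)).symm
  · have hinvbot : Filter.Tendsto (fun α : ℝ => α⁻¹) Filter.atBot (nhds 0) := by
      have h1 : Filter.Tendsto (fun α : ℝ => -α) Filter.atBot Filter.atTop :=
        Filter.tendsto_neg_atBot_atTop
      have h2 : Filter.Tendsto (fun α : ℝ => (-α)⁻¹) Filter.atBot (nhds 0) :=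
        tendsto_inv_atTop_zero.comp h1
      have h3 := h2.neg
      simp only [inv_neg, neg_neg, neg_zero] at h3
      exact h3
    apply Filter.Tendsto.congr' _ (hg.comp hinvbot)
    filter_upwards [Filter.eventually_lt_atBot 0] with α hα
    exact (heq α (ne_of_lt hα)).symm
end

section
/- For every fixed real z, the cumulative distribution function of the Balakrishnan alpha skew normal distribution converges as α → +∞ (and as α → −∞) to that of the bimodal normal BN(4) distribution: lim_{α → ±∞} [ Φ(z) + α(8 − 8αz + 4α²(2 + z²) − α³ z(3 + z²)) φ(z) / ((2 + α²)(2 + 3α²)) ] = Φ(z) − z(3 + z²) φ(z) / 3. -/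
open MeasureTheory

lemma basn2_aux (z : ℝ) {l : Filter ℝ} (hinv : Filter.Tendsto (fun α : ℝ => α⁻¹) l (nhds 0))
    (hne : ∀ᶠ α : ℝ in l, α ≠ 0) :
    Filter.Tendsto
      (fun α : ℝ => Phi z +
        α * (8 - 8 * α * z + 4 * α ^ 2 * (2 + z ^ 2) - α ^ 3 * z * (3 + z ^ 2)) * phi z /
          ((2 + α ^ 2) * (2 + 3 * α ^ 2)))
      l (nhds (Phi z - z * (3 + z ^ 2) * phi z / 3)) := by
  have hF : Filter.Tendsto
      (fun u : ℝ => Phi z +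
        (8 * u ^ 3 - 8 * z * u ^ 2 + 4 * (2 + z ^ 2) * u - z * (3 + z ^ 2)) * phi z /
          ((2 * u ^ 2 + 1) * (2 * u ^ 2 + 3))) (nhds 0)
      (nhds (Phi z - z * (3 + z ^ 2) * phi z / 3)) := by
    have hc : Continuous (fun u : ℝ => Phi z +
        (8 * u ^ 3 - 8 * z * u ^ 2 + 4 * (2 + z ^ 2) * u - z * (3 + z ^ 2)) * phi z /
          ((2 * u ^ 2 + 1) * (2 * u ^ 2 + 3))) := by
      apply continuous_const.add
      apply Continuous.div (by fun_prop)
      · fun_prop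
      · intro u
        positivity
    have h0 := hc.tendsto 0
    convert h0 using 2
    norm_num
    ring
  have := hF.comp hinv
  refine this.congr' ?_
  filter_upwards [hne] with α hα
  have hα2 : (2 : ℝ) + α ^ 2 ≠ 0 := by positivity
  have hα3 : (2 : ℝ) + 3 * α ^ 2 ≠ 0 := by positivity
  simp only [Function.comp]
  congr 1
  field_simp

theorem basn2_cdf_limit (z : ℝ) :
    Filter.Tendsto
      (fun α : ℝ => Phi z +
        α * (8 - 8 * α * z + 4 * α ^ 2 * (2 + z ^ 2) - α ^ 3 * z * (3 + z ^ 2)) * phi z /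
          ((2 + α ^ 2) * (2 + 3 * α ^ 2)))
      Filter.atTop (nhds (Phi z - z * (3 + z ^ 2) * phi z / 3)) ∧
    Filter.Tendsto
      (fun α : ℝ => Phi z +
        α * (8 - 8 * α * z + 4 * α ^ 2 * (2 + z ^ 2) - α ^ 3 * z * (3 + z ^ 2)) * phi z /
          ((2 + α ^ 2) * (2 + 3 * α ^ 2)))
      Filter.atBot (nhds (Phi z - z * (3 + z ^ 2) * phi z / 3)) := by
  constructor
  · exact basn2_aux z tendsto_inv_atTop_zero
      (Filter.eventually_atTop.2 ⟨1, fun α hα => by linarith⟩)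
  · have hinv : Filter.Tendsto (fun α : ℝ => α⁻¹) Filter.atBot (nhds 0) := by
      have h1 : Filter.Tendsto (fun r : ℝ => r⁻¹) Filter.atTop (nhds 0) :=
        tendsto_inv_atTop_zero
      have h2 : Filter.Tendsto (fun α : ℝ => -α) Filter.atBot Filter.atTop :=
        Filter.tendsto_neg_atBot_atTop
      have h3 := (h1.comp h2).neg
      rw [neg_zero] at h3
      refine h3.congr fun α => ?_
      simp [Function.comp, inv_neg]
    exact basn2_aux z hinv
      (Filter.eventually_atBot.2 ⟨-1, fun α hα => by linarith⟩)
end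

section
/- For every real α, the set of critical points of the Balakrishnan alpha skew normal density has at most three elements: the set { z ∈ ℝ : the derivative at z of the function z ↦ ((1 − α z)² + 1)² φ(z) / ((2 + α²)(2 + 3α²)) equals 0 } is finite with cardinality at most 3. In particular the density has at most two modes. -/
open MeasureTheory Polynomial

lemma phi_pos (z : ℝ) : 0 < phi z := by
  have h2π : 0 < 2 * Real.pi := by positivity
  unfold phi
  positivity

lemma phi_hasDeriv (z : ℝ) : HasDerivAt phi (-z * phi z) z := by
  have h1 : HasDerivAt (fun w : ℝ => -w ^ 2 / 2) (-z) z := by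
    have := ((hasDerivAt_pow 2 z).neg).div_const 2
    convert (by exact this : HasDerivAt (fun w : ℝ => -w ^ 2 / 2) _ z) using 1
    push_cast
    ring
  have h3 := (h1.exp).const_mul ((Real.sqrt (2 * Real.pi))⁻¹)
  have h4 : HasDerivAt phi ((Real.sqrt (2 * Real.pi))⁻¹ * (Real.exp (-z ^ 2 / 2) * (-z))) z := h3
  have : (Real.sqrt (2 * Real.pi))⁻¹ * (Real.exp (-z ^ 2 / 2) * (-z)) = -z * phi z := by
    unfold phi; ring
  rwa [this] at h4

theorem basn2_critical_points (α : ℝ) :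
    {z : ℝ | deriv
        (fun w : ℝ => ((1 - α * w) ^ 2 + 1) ^ 2 * phi w / ((2 + α ^ 2) * (2 + 3 * α ^ 2)))
        z = 0}.Finite ∧
    Set.ncard {z : ℝ | deriv
        (fun w : ℝ => ((1 - α * w) ^ 2 + 1) ^ 2 * phi w / ((2 + α ^ 2) * (2 + 3 * α ^ 2)))
        z = 0} ≤ 3 := by
  have hcpos : (0:ℝ) < (2 + α ^ 2) * (2 + 3 * α ^ 2) := by positivity
  have key : ∀ z : ℝ, deriv
      (fun w : ℝ => ((1 - α * w) ^ 2 + 1) ^ 2 * phi w / ((2 + α ^ 2) * (2 + 3 * α ^ 2))) z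
      = (phi z * (((1 - α * z) ^ 2 + 1) *
          -(4 * α * (1 - α * z) + z * ((1 - α * z) ^ 2 + 1)))) /
        ((2 + α ^ 2) * (2 + 3 * α ^ 2)) := by
    intro z
    have h0 : HasDerivAt (fun w : ℝ => 1 - α * w) (-α) z := by
      simpa using ((hasDerivAt_id z).const_mul α).const_sub 1
    have hP := ((h0.pow 2).add_const 1).pow 2
    have hmul := hP.mul (phi_hasDeriv z)
    rw [deriv_div_const, (by exact hmul : HasDerivAt (fun w => ((1 - α * w) ^ 2 + 1) ^ 2 * phi w) _ z).deriv]
    simp only [Pi.pow_apply]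
    push_cast
    ring
  have hequiv : ∀ z : ℝ, deriv
      (fun w : ℝ => ((1 - α * w) ^ 2 + 1) ^ 2 * phi w / ((2 + α ^ 2) * (2 + 3 * α ^ 2))) z = 0 ↔
      4 * α * (1 - α * z) + z * ((1 - α * z) ^ 2 + 1) = 0 := by
    intro z
    rw [key z]
    constructor
    · intro h
      have h' : phi z * (((1 - α * z) ^ 2 + 1) *
          -(4 * α * (1 - α * z) + z * ((1 - α * z) ^ 2 + 1))) = 0 :=
        (div_eq_zero_iff.mp h).resolve_right hcpos.ne'
      have hA : (0:ℝ) < (1 - α * z) ^ 2 + 1 := by positivity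
      rcases mul_eq_zero.mp h' with h1 | h2
      · exact absurd h1 (phi_pos z).ne'
      rcases mul_eq_zero.mp h2 with h3 | h4
      · exact absurd h3 hA.ne'
      · exact neg_eq_zero.mp h4
    · intro h
      rw [h]
      simp
  set p : Polynomial ℝ := C (4 * α) + C (2 - 4 * α ^ 2) * X + C (-(2 * α)) * X ^ 2
      + C (α ^ 2) * X ^ 3 with hp
  have heval : ∀ z : ℝ, p.eval z = 4 * α * (1 - α * z) + z * ((1 - α * z) ^ 2 + 1) := by
    intro z
    simp only [hp, eval_add, eval_mul, eval_C, eval_X, eval_pow]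
    ring
  have hp0 : p ≠ 0 := by
    intro h
    by_cases hα : α = 0
    · have h1 := congrArg (fun q => Polynomial.coeff q 1) h
      simp only [hp, coeff_add, coeff_C_mul, coeff_X_pow, coeff_C, coeff_X, coeff_zero] at h1
      norm_num [hα] at h1
    · have h3 := congrArg (fun q => Polynomial.coeff q 3) h
      simp only [hp, coeff_add, coeff_C_mul, coeff_X_pow, coeff_C, coeff_X, coeff_zero] at h3
      norm_num at h3
      exact hα h3
  have hdeg : p.natDegree ≤ 3 := by
    rw [hp]
    compute_degree
  have hsub : {z : ℝ | deriv
      (fun w : ℝ => ((1 - α * w) ^ 2 + 1) ^ 2 * phi w / ((2 + α ^ 2) * (2 + 3 * α ^ 2)))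
      z = 0} ⊆ (p.roots.toFinset : Set ℝ) := by
    intro z hz
    simp only [Set.mem_setOf_eq] at hz
    simp only [Finset.coe_sort_coe, Multiset.mem_toFinset, Finset.mem_coe,
      mem_roots hp0, IsRoot.def]
    rw [heval]
    exact (hequiv z).mp hz
  refine ⟨Set.Finite.subset (p.roots.toFinset.finite_toSet) hsub, ?_⟩
  calc Set.ncard _ ≤ Set.ncard (p.roots.toFinset : Set ℝ) :=
        Set.ncard_le_ncard hsub (p.roots.toFinset.finite_toSet)
    _ = p.roots.toFinset.card := Set.ncard_coe_finset _
    _ ≤ Multiset.card p.roots := Multiset.toFinset_card_le _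
    _ ≤ p.natDegree := Polynomial.card_roots' p
    _ ≤ 3 := hdeg
end

section
/- Let α, β ∈ ℝ. Then ∫_ℝ ((1 − α z − β z³)² + 1)² φ(z) dz = 4 + 3α⁴ + 60α³β + 12αβ(4 + 315β²) + α²(8 + 630β²) + 15β²(8 + 693β²). Consequently the Balakrishnan alpha-beta skew normal density f(z; α, β) = ((1 − αz − βz³)² + 1)² φ(z) / C(α, β), with C(α, β) equal to this expression, is a probability density on ℝ. -/
open MeasureTheory

lemma phi_nonneg (z : ℝ) : 0 ≤ phi z := by unfold phi; positivity

lemma ig (n : ℕ) : Integrable fun x : ℝ => x ^ n * Real.exp (-x ^ 2 / 2) := by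
  have h := integrable_rpow_mul_exp_neg_mul_sq (b := 1/2) (by norm_num) (s := (n:ℝ))
    (by exact lt_of_lt_of_le (by norm_num) (Nat.cast_nonneg n))
  simp only [Real.rpow_natCast] at h
  convert h using 2 with x
  ring_nf

lemma igphi (n : ℕ) : Integrable fun x : ℝ => x ^ n * phi x := by
  have h := (ig n).const_mul (Real.sqrt (2 * Real.pi))⁻¹
  simp only [phi]
  convert h using 2 with x
  ring

lemma iodd (n : ℕ) (hn : Odd n) : ∫ x : ℝ, x ^ n * phi x = 0 := by
  have h := MeasureTheory.integral_neg_eq_self (fun x : ℝ => x ^ n * phi x) volume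
  simp only [hn.neg_pow, phi, neg_sq, neg_mul, integral_neg] at h
  simp only [phi]
  linarith

lemma geven (m : ℕ) : ∫ x : ℝ, x ^ (2*m) * Real.exp (-x ^ 2 / 2)
    = 2 ^ m * Real.sqrt 2 * Real.Gamma ((2*m+1)/2) := by
  have h2 : (∫ x : ℝ, x ^ (2*m) * Real.exp (-x ^ 2 / 2))
      = 2 * ∫ x in Set.Ioi (0:ℝ), x ^ (2*m) * Real.exp (-x ^ 2 / 2) := by
    have habs := integral_comp_abs (f := fun x : ℝ => x ^ (2*m) * Real.exp (-x ^ 2 / 2))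
    rw [← habs]
    congr 1
    funext x
    rw [pow_mul, pow_mul, sq_abs]
  have h3 := integral_rpow_mul_exp_neg_mul_rpow (p := 2) (q := ((2*m : ℕ):ℝ)) (b := 1/2)
    (by norm_num) (lt_of_lt_of_le (by norm_num) (Nat.cast_nonneg _)) (by norm_num)
  simp only [Real.rpow_two, Real.rpow_natCast] at h3
  rw [h2, show (∫ x in Set.Ioi (0:ℝ), x ^ (2*m) * Real.exp (-x ^ 2 / 2))
      = ∫ x in Set.Ioi (0:ℝ), x ^ (2*m) * Real.exp (-(1/2) * x ^ (2:ℕ)) from by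
    congr 1; funext x; ring_nf, h3]
  have hpow : ((1:ℝ)/2) ^ (-(((2*m:ℕ):ℝ) + 1) / (2:ℝ)) = 2 ^ m * Real.sqrt 2 := by
    rw [one_div, ← Real.rpow_neg_one (2:ℝ), ← Real.rpow_natCast (2:ℝ) m,
      ← Real.rpow_mul (by norm_num), Real.sqrt_eq_rpow, ← Real.rpow_add (by norm_num)]
    congr 1
    push_cast
    ring
  rw [hpow]
  push_cast
  ring

lemma phiev (m : ℕ) (c : ℝ) (h : Real.Gamma ((2*(m:ℝ)+1)/2) = c * Real.sqrt Real.pi) :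
    ∫ z : ℝ, z ^ (2*m) * phi z = 2 ^ m * c := by
  have hs : Real.sqrt (2*Real.pi) = Real.sqrt 2 * Real.sqrt Real.pi :=
    Real.sqrt_mul (by norm_num) _
  have h1 : (∫ z : ℝ, z ^ (2*m) * phi z)
      = (Real.sqrt (2*Real.pi))⁻¹ * ∫ z : ℝ, z ^ (2*m) * Real.exp (-z ^ 2 / 2) := by
    rw [← integral_const_mul]
    congr 1; funext z; simp only [phi]; ring
  rw [h1, geven, h, hs]
  have h2 : Real.sqrt 2 ≠ 0 := by positivity
  have h3 : Real.sqrt Real.pi ≠ 0 := by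
    have := Real.pi_pos; positivity
  field_simp

lemma G1 : Real.Gamma ((1:ℝ)/2) = 1 * Real.sqrt Real.pi := by
  rw [Real.Gamma_one_half_eq, one_mul]
lemma G3 : Real.Gamma ((3:ℝ)/2) = 1/2 * Real.sqrt Real.pi := by
  rw [show ((3:ℝ)/2) = 1/2 + 1 by norm_num, Real.Gamma_add_one (by norm_num), G1]
  ring
lemma G5 : Real.Gamma ((5:ℝ)/2) = 3/4 * Real.sqrt Real.pi := by
  rw [show ((5:ℝ)/2) = 3/2 + 1 by norm_num, Real.Gamma_add_one (by norm_num), G3]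
  ring
lemma G7 : Real.Gamma ((7:ℝ)/2) = 15/8 * Real.sqrt Real.pi := by
  rw [show ((7:ℝ)/2) = 5/2 + 1 by norm_num, Real.Gamma_add_one (by norm_num), G5]
  ring
lemma G9 : Real.Gamma ((9:ℝ)/2) = 105/16 * Real.sqrt Real.pi := by
  rw [show ((9:ℝ)/2) = 7/2 + 1 by norm_num, Real.Gamma_add_one (by norm_num), G7]
  ring
lemma G11 : Real.Gamma ((11:ℝ)/2) = 945/32 * Real.sqrt Real.pi := by
  rw [show ((11:ℝ)/2) = 9/2 + 1 by norm_num, Real.Gamma_add_one (by norm_num), G9]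
  ring
lemma G13 : Real.Gamma ((13:ℝ)/2) = 10395/64 * Real.sqrt Real.pi := by
  rw [show ((13:ℝ)/2) = 11/2 + 1 by norm_num, Real.Gamma_add_one (by norm_num), G11]
  ring
lemma M0 : ∫ z : ℝ, z ^ 0 * phi z = 1 := by
  have := phiev 0 1 (by
    push_cast
    rw [show ((2*(0:ℝ)+1)/2) = 1/2 by norm_num, G1])
  norm_num at this
  convert this using 2 <;> norm_num
lemma M2 : ∫ z : ℝ, z ^ 2 * phi z = 1 := by
  have := phiev 1 (1/2) (by
    push_cast
    rw [show ((2*(1:ℝ)+1)/2) = 3/2 by norm_num, G3])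
  norm_num at this
  convert this using 2 <;> norm_num
lemma M4 : ∫ z : ℝ, z ^ 4 * phi z = 3 := by
  have := phiev 2 (3/4) (by
    push_cast
    rw [show ((2*(2:ℝ)+1)/2) = 5/2 by norm_num, G5])
  norm_num at this
  convert this using 2 <;> norm_num
lemma M6 : ∫ z : ℝ, z ^ 6 * phi z = 15 := by
  have := phiev 3 (15/8) (by
    push_cast
    rw [show ((2*(3:ℝ)+1)/2) = 7/2 by norm_num, G7])
  norm_num at this
  convert this using 2 <;> norm_num
lemma M8 : ∫ z : ℝ, z ^ 8 * phi z = 105 := by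
  have := phiev 4 (105/16) (by
    push_cast
    rw [show ((2*(4:ℝ)+1)/2) = 9/2 by norm_num, G9])
  norm_num at this
  convert this using 2 <;> norm_num
lemma M10 : ∫ z : ℝ, z ^ 10 * phi z = 945 := by
  have := phiev 5 (945/32) (by
    push_cast
    rw [show ((2*(5:ℝ)+1)/2) = 11/2 by norm_num, G11])
  norm_num at this
  convert this using 2 <;> norm_num
lemma M12 : ∫ z : ℝ, z ^ 12 * phi z = 10395 := by
  have := phiev 6 (10395/64) (by
    push_cast
    rw [show ((2*(6:ℝ)+1)/2) = 13/2 by norm_num, G13])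
  norm_num at this
  convert this using 2 <;> norm_num
lemma Modd (n : ℕ) (h : n % 2 = 1) : ∫ z : ℝ, z ^ n * phi z = 0 :=
  iodd n (Nat.odd_iff.mpr h)

noncomputable def bco (α β : ℝ) : ℕ → ℝ
  | 0 => 4
  | 1 => -(8*α)
  | 2 => 8*α^2
  | 3 => -(8*β) - 4*α^3
  | 4 => 16*α*β + α^4
  | 5 => -(12*α^2*β)
  | 6 => 8*β^2 + 4*α^3*β
  | 7 => -(12*α*β^2)
  | 8 => 6*α^2*β^2
  | 9 => -(4*β^3)
  | 10 => 4*α*β^3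
  | 11 => 0
  | 12 => β^4
  | _ => 0

theorem babsn2_normalizing_constant (α β : ℝ) :
    (∫ z : ℝ, ((1 - α * z - β * z ^ 3) ^ 2 + 1) ^ 2 * phi z) =
      4 + 3 * α ^ 4 + 60 * α ^ 3 * β + 12 * α * β * (4 + 315 * β ^ 2) +
        α ^ 2 * (8 + 630 * β ^ 2) + 15 * β ^ 2 * (8 + 693 * β ^ 2) ∧
    (∀ z : ℝ,
      0 ≤ ((1 - α * z - β * z ^ 3) ^ 2 + 1) ^ 2 * phi z /
        (4 + 3 * α ^ 4 + 60 * α ^ 3 * β + 12 * α * β * (4 + 315 * β ^ 2) +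
          α ^ 2 * (8 + 630 * β ^ 2) + 15 * β ^ 2 * (8 + 693 * β ^ 2))) ∧
    (∫ z : ℝ, ((1 - α * z - β * z ^ 3) ^ 2 + 1) ^ 2 * phi z /
        (4 + 3 * α ^ 4 + 60 * α ^ 3 * β + 12 * α * β * (4 + 315 * β ^ 2) +
          α ^ 2 * (8 + 630 * β ^ 2) + 15 * β ^ 2 * (8 + 693 * β ^ 2))) = 1 := by
  have key : ∀ z : ℝ, ((1 - α * z - β * z ^ 3) ^ 2 + 1) ^ 2 * phi z
      = ∑ i ∈ Finset.range 13, bco α β i * (z ^ i * phi z) := by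
    intro z
    simp only [Finset.sum_range_succ, Finset.sum_range_zero, bco]
    ring
  have hint : ∀ i ∈ Finset.range 13,
      Integrable (fun z : ℝ => bco α β i * (z ^ i * phi z)) volume :=
    fun i _ => (igphi i).const_mul _
  have h1 : (∫ z : ℝ, ((1 - α * z - β * z ^ 3) ^ 2 + 1) ^ 2 * phi z) =
      4 + 3 * α ^ 4 + 60 * α ^ 3 * β + 12 * α * β * (4 + 315 * β ^ 2) +
        α ^ 2 * (8 + 630 * β ^ 2) + 15 * β ^ 2 * (8 + 693 * β ^ 2) := by
    calc (∫ z : ℝ, ((1 - α * z - β * z ^ 3) ^ 2 + 1) ^ 2 * phi z)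
        = ∫ z : ℝ, ∑ i ∈ Finset.range 13, bco α β i * (z ^ i * phi z) := by
          congr 1; funext z; exact key z
      _ = ∑ i ∈ Finset.range 13, ∫ z : ℝ, bco α β i * (z ^ i * phi z) :=
          integral_finset_sum _ hint
      _ = ∑ i ∈ Finset.range 13, bco α β i * ∫ z : ℝ, z ^ i * phi z := by
          simp only [integral_const_mul]
      _ = _ := by
          simp only [Finset.sum_range_succ, Finset.sum_range_zero, bco]
          rw [M0, M2, M4, M6, M8, M10, M12, Modd 1 rfl, Modd 3 rfl, Modd 5 rfl,
            Modd 7 rfl, Modd 9 rfl, Modd 11 rfl]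
          ring
  have hbig_int : Integrable (fun z : ℝ => ((1 - α * z - β * z ^ 3) ^ 2 + 1) ^ 2 * phi z) := by
    exact (integrable_finset_sum _ hint).congr
      (Filter.Eventually.of_forall fun z => (key z).symm)
  have hphi_int : Integrable phi := by
    have := igphi 0
    simpa using this
  have hphi1 : ∫ z : ℝ, phi z = 1 := by simpa using M0
  have hge : (1:ℝ) ≤ 4 + 3 * α ^ 4 + 60 * α ^ 3 * β + 12 * α * β * (4 + 315 * β ^ 2) +
      α ^ 2 * (8 + 630 * β ^ 2) + 15 * β ^ 2 * (8 + 693 * β ^ 2) := by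
    have hmono : (∫ z : ℝ, phi z) ≤
        ∫ z : ℝ, ((1 - α * z - β * z ^ 3) ^ 2 + 1) ^ 2 * phi z := by
      refine integral_mono hphi_int hbig_int fun z => ?_
      have h2' : 1 ≤ ((1 - α * z - β * z ^ 3) ^ 2 + 1) ^ 2 := by
        nlinarith [sq_nonneg (1 - α * z - β * z ^ 3)]
      calc phi z = 1 * phi z := (one_mul _).symm
        _ ≤ ((1 - α * z - β * z ^ 3) ^ 2 + 1) ^ 2 * phi z :=
            mul_le_mul_of_nonneg_right h2' (phi_nonneg z)
    rw [hphi1, h1] at hmono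
    linarith
  have hCpos : (0:ℝ) < 4 + 3 * α ^ 4 + 60 * α ^ 3 * β + 12 * α * β * (4 + 315 * β ^ 2) +
      α ^ 2 * (8 + 630 * β ^ 2) + 15 * β ^ 2 * (8 + 693 * β ^ 2) := by linarith
  refine ⟨h1, fun z => div_nonneg (mul_nonneg (by positivity) (phi_nonneg z)) hCpos.le, ?_⟩
  rw [integral_div, h1, div_self hCpos.ne']
end
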